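/- arXiv:math/0203190 — 11 statements merged into one kernel-verified Lean document; each statement's English description precedes it below -/
import Mathlib

section
/- For any nonempty bounded subset A of a real Hilbert space H consisting of at least two points, the Chebyshev radius of A with respect to H satisfies r_H(A) ≤ (1/√2)·d(A), where d(A) is the diameter of A. -/
noncomputable def chebRadius {H : Type*} [NormedAddCommGroup H] (A : Set H) : ℝ :=
  ⨅ y : H, ⨆ x : A, ‖(x : H) - y‖

/-!
By the parallelogram law, any two centres `y, y'` whose farthest distances from `A` are
close to the Chebyshev radius `r` are close to each other, so a minimising sequence is Cauchy
and a Chebyshev centre `c` exists. For every `ε > 0`, `c` lies in the closed convex hull of the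
far points `{x ∈ A | r² - ε < ‖x - c‖²}`: otherwise a separating direction would let us move `c`
towards them and lower the farthest distance below `r`. Any two far points `x, y` satisfy
`⟪x - c, y - c⟫ ≥ r² - ε - d²/2`, and this bound passes to `‖z - c‖²` for `z` in their closed
convex hull; taking `z = c` gives `r² ≤ d²/2 + ε`.
-/

open Filter Metric Set Topology RealInnerProductSpace

noncomputable def farthestDist {α : Type*} [PseudoMetricSpace α] (A : Set α) (y : α) : ℝ :=
  ⨆ x : A, dist (x : α) y

section Metric

variable {α : Type*} [PseudoMetricSpace α] {A : Set α} {x y : α} {b : ℝ}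

theorem farthestDist_nonneg : 0 ≤ farthestDist A y :=
  Real.iSup_nonneg fun _ => dist_nonneg

theorem dist_le_farthestDist (hb : Bornology.IsBounded A) (hx : x ∈ A) (y : α) :
    dist x y ≤ farthestDist A y := by
  obtain ⟨R, hR⟩ := hb.subset_closedBall y
  exact le_ciSup (f := fun x : A => dist (x : α) y) ⟨R, by rintro _ ⟨z, rfl⟩; exact hR z.2⟩ ⟨x, hx⟩

theorem farthestDist_le (hb0 : 0 ≤ b) (h : ∀ x ∈ A, dist x y ≤ b) : farthestDist A y ≤ b :=
  Real.iSup_le (fun x => h x x.2) hb0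

theorem farthestDist_sq_le (hA : A.Nonempty) (h : ∀ x ∈ A, dist x y ^ 2 ≤ b) :
    farthestDist A y ^ 2 ≤ b := by
  obtain ⟨x₀, hx₀⟩ := hA
  have hb0 : 0 ≤ b := (sq_nonneg _).trans (h x₀ hx₀)
  have : farthestDist A y ≤ √b :=
    farthestDist_le (Real.sqrt_nonneg b) fun x hx => (Real.le_sqrt dist_nonneg hb0).2 (h x hx)
  exact (Real.le_sqrt farthestDist_nonneg hb0).1 this

theorem farthestDist_le_add_dist (hb : Bornology.IsBounded A) (y y' : α) :
    farthestDist A y ≤ farthestDist A y' + dist y y' :=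
  farthestDist_le (add_nonneg farthestDist_nonneg dist_nonneg) fun x hx =>
    calc dist x y ≤ dist x y' + dist y' y := dist_triangle _ _ _
      _ ≤ farthestDist A y' + dist y y' := by
        rw [dist_comm y']; gcongr; exact dist_le_farthestDist hb hx y'

theorem lipschitzWith_farthestDist (hb : Bornology.IsBounded A) :
    LipschitzWith 1 (farthestDist A) :=
  LipschitzWith.of_le_add (farthestDist_le_add_dist hb)

end Metric

section Normed

variable {E : Type*} [NormedAddCommGroup E] {A : Set E}

theorem chebRadius_eq_iInf_farthestDist : chebRadius A = ⨅ y, farthestDist A y := by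
  simp only [chebRadius, farthestDist, dist_eq_norm]

theorem chebRadius_nonneg : 0 ≤ chebRadius A := by
  rw [chebRadius_eq_iInf_farthestDist]
  exact Real.iInf_nonneg fun _ => farthestDist_nonneg

theorem chebRadius_le_farthestDist (y : E) : chebRadius A ≤ farthestDist A y := by
  rw [chebRadius_eq_iInf_farthestDist]
  exact ciInf_le ⟨0, by rintro _ ⟨z, rfl⟩; exact farthestDist_nonneg⟩ y

theorem exists_farthestDist_lt_of_chebRadius_lt {t : ℝ} (h : chebRadius A < t) :
    ∃ y, farthestDist A y < t := by
  rw [chebRadius_eq_iInf_farthestDist] at h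
  exact exists_lt_of_ciInf_lt h

end Normed

section InnerProduct

variable {H : Type*} [NormedAddCommGroup H] [InnerProductSpace ℝ H] {A : Set H}

theorem dist_sq_le_farthestDist (hA : A.Nonempty) (hb : Bornology.IsBounded A) (y y' : H) :
    dist y y' ^ 2 ≤
      2 * farthestDist A y ^ 2 + 2 * farthestDist A y' ^ 2 - 4 * chebRadius A ^ 2 := by
  set m := midpoint ℝ y y'
  have hm : farthestDist A m ^ 2 ≤
      farthestDist A y ^ 2 / 2 + farthestDist A y' ^ 2 / 2 - dist y y' ^ 2 / 4 := by
    refine farthestDist_sq_le hA fun x hx => ?_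
    have := EuclideanGeometry.dist_sq_add_dist_sq_eq_two_mul_dist_midpoint_sq_add_half_dist_sq
      x y y'
    have hy := pow_le_pow_left₀ dist_nonneg (dist_le_farthestDist hb hx y) 2
    have hy' := pow_le_pow_left₀ dist_nonneg (dist_le_farthestDist hb hx y') 2
    linarith
  have := pow_le_pow_left₀ chebRadius_nonneg (chebRadius_le_farthestDist (A := A) m) 2
  linarith

theorem cauchySeq_of_tendsto_farthestDist (hA : A.Nonempty) (hb : Bornology.IsBounded A)
    {y : ℕ → H} (h : Tendsto (fun n => farthestDist A (y n)) atTop (𝓝 (chebRadius A))) :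
    CauchySeq y := by
  refine Metric.cauchySeq_iff'.2 fun ε hε => ?_
  have hlt : chebRadius A ^ 2 < chebRadius A ^ 2 + ε ^ 2 / 4 := by linarith [sq_pos_of_pos hε]
  obtain ⟨N, hN⟩ := eventually_atTop.1 ((h.pow 2).eventually (gt_mem_nhds hlt))
  refine ⟨N, fun n hn => lt_of_pow_lt_pow_left₀ 2 hε.le ?_⟩
  linarith [dist_sq_le_farthestDist hA hb (y n) (y N), hN n hn, hN N le_rfl]

theorem exists_farthestDist_eq_chebRadius [CompleteSpace H] (hA : A.Nonempty)
    (hb : Bornology.IsBounded A) : ∃ c, farthestDist A c = chebRadius A := by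
  have : ∀ n : ℕ, ∃ y, farthestDist A y < chebRadius A + 1 / (n + 1) := fun n =>
    exists_farthestDist_lt_of_chebRadius_lt (lt_add_of_pos_right _ Nat.one_div_pos_of_nat)
  choose y hy using this
  have hlim : Tendsto (fun n => farthestDist A (y n)) atTop (𝓝 (chebRadius A)) := by
    refine tendsto_of_tendsto_of_tendsto_of_le_of_le tendsto_const_nhds ?_
      (fun n => chebRadius_le_farthestDist (y n)) (fun n => (hy n).le)
    simpa using tendsto_one_div_add_atTop_nhds_zero_nat.const_add (chebRadius A)
  obtain ⟨c, hc⟩ := cauchySeq_tendsto_of_complete (cauchySeq_of_tendsto_farthestDist hA hb hlim)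
  exact ⟨c, tendsto_nhds_unique
    (((lipschitzWith_farthestDist hb).continuous.tendsto c).comp hc) hlim⟩

theorem exists_inner_ge_of_notMem_closure_convexHull [CompleteSpace H] {s : Set H} {c : H}
    (hc : c ∉ closure (convexHull ℝ s)) : ∃ v : H, ∃ θ > 0, ∀ x ∈ s, θ ≤ ⟪v, x - c⟫ := by
  obtain ⟨f, u, hfu, huc⟩ :=
    geometric_hahn_banach_closed_point (convex_convexHull ℝ s).closure isClosed_closure hc
  refine ⟨-(InnerProductSpace.toDual ℝ H).symm f, f c - u, sub_pos.2 huc, fun x hx => ?_⟩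
  have := hfu x (subset_closure (subset_convexHull ℝ s hx))
  rw [inner_neg_left, InnerProductSpace.toDual_symm_apply, map_sub]
  linarith

theorem exists_farthestDist_lt_of_notMem_closure_convexHull [CompleteSpace H] (hA : A.Nonempty)
    {c : H} {ρ ε : ℝ} (hc : ∀ x ∈ A, dist x c ≤ ρ) (hε : 0 < ε)
    (hfar : c ∉ closure (convexHull ℝ {x ∈ A | ρ ^ 2 - ε < dist x c ^ 2})) :
    ∃ c', farthestDist A c' < ρ := by
  obtain ⟨v, θ, hθ, hv⟩ := exists_inner_ge_of_notMem_closure_convexHull hfar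
  -- For small `t > 0`, moving `c` to `c + t • v` brings the far points closer while keeping the
  -- others within distance `ρ`.
  have hsmall : ∀ᶠ t in 𝓝 (0 : ℝ),
      t * ‖v‖ ^ 2 < 2 * θ ∧ 2 * t * ρ * ‖v‖ + t ^ 2 * ‖v‖ ^ 2 < ε :=
    (ContinuousAt.eventually_lt (by fun_prop) (by fun_prop) (by simpa using hθ)).and
      (ContinuousAt.eventually_lt (by fun_prop) (by fun_prop) (by simpa using hε))
  obtain ⟨t, ⟨ht₁, ht₂⟩, ht⟩ := ((hsmall.filter_mono nhdsWithin_le_nhds).and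
    (self_mem_nhdsWithin (s := Ioi 0))).exists
  have hρ : 0 ≤ ρ := let ⟨x, hx⟩ := hA; dist_nonneg.trans (hc x hx)
  set M := max (ρ ^ 2 - 2 * t * θ + t ^ 2 * ‖v‖ ^ 2)
    (ρ ^ 2 - ε + 2 * t * ρ * ‖v‖ + t ^ 2 * ‖v‖ ^ 2)
  have hM : M < ρ ^ 2 := max_lt (by nlinarith) (by linarith)
  refine ⟨c + t • v,
    lt_of_pow_lt_pow_left₀ 2 hρ ((farthestDist_sq_le hA fun x hx => ?_).trans_lt hM)⟩
  have hexp : dist x (c + t • v) ^ 2 = dist x c ^ 2 - 2 * t * ⟪v, x - c⟫ + t ^ 2 * ‖v‖ ^ 2 := by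
    rw [dist_eq_norm, dist_eq_norm, sub_add_eq_sub_sub, norm_sub_sq_real, inner_smul_right,
      norm_smul, mul_pow, Real.norm_eq_abs, sq_abs, real_inner_comm]
    ring
  have hxc := pow_le_pow_left₀ dist_nonneg (hc x hx) 2
  by_cases hxfar : ρ ^ 2 - ε < dist x c ^ 2
  · have := hv x ⟨hx, hxfar⟩
    exact le_max_of_le_left (by nlinarith)
  · have hinner : -(ρ * ‖v‖) ≤ ⟪v, x - c⟫ := by
      have := neg_le_of_abs_le (abs_real_inner_le_norm v (x - c))
      rw [← dist_eq_norm] at this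
      nlinarith [norm_nonneg v, hc x hx]
    exact le_max_of_le_right (by nlinarith)

theorem mem_closure_convexHull_of_farthestDist_eq_chebRadius [CompleteSpace H] (hA : A.Nonempty)
    (hb : Bornology.IsBounded A) {c : H} (hc : farthestDist A c = chebRadius A) {ε : ℝ}
    (hε : 0 < ε) : c ∈ closure (convexHull ℝ {x ∈ A | chebRadius A ^ 2 - ε < dist x c ^ 2}) := by
  by_contra hfar
  obtain ⟨c', hc'⟩ := exists_farthestDist_lt_of_notMem_closure_convexHull hA
    (fun x hx => hc ▸ dist_le_farthestDist hb hx c) hε hfar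
  exact hc'.not_ge (chebRadius_le_farthestDist c')

theorem sub_le_dist_sq_of_mem_closure_convexHull {S : Set H} {a d : ℝ} {c z : H}
    (hfar : ∀ x ∈ S, a ≤ dist x c ^ 2) (hdiam : ∀ x ∈ S, ∀ y ∈ S, dist x y ≤ d)
    (hz : z ∈ closure (convexHull ℝ S)) : a - d ^ 2 / 2 ≤ dist z c ^ 2 := by
  have hhalf : ∀ u : H, Convex ℝ {w | a - d ^ 2 / 2 ≤ ⟪u, w - c⟫} := fun u => by
    simpa only [inner_sub_right, le_sub_iff_add_le, innerₛₗ_apply_apply] using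
      convex_halfSpace_ge (innerₛₗ ℝ u).isLinear (a - d ^ 2 / 2 + ⟪u, c⟫)
  have hpair : ∀ x ∈ S, ∀ y ∈ S, a - d ^ 2 / 2 ≤ ⟪x - c, y - c⟫ := fun x hx y hy => by
    have hpol := norm_sub_sq_real (x - c) (y - c)
    rw [sub_sub_sub_cancel_right, ← dist_eq_norm, ← dist_eq_norm, ← dist_eq_norm] at hpol
    have hxy := pow_le_pow_left₀ dist_nonneg (hdiam x hx y hy) 2
    linarith [hfar x hx, hfar y hy]
  have hhull : ∀ w ∈ convexHull ℝ S, a - d ^ 2 / 2 ≤ dist w c ^ 2 := fun w hw => by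
    have hw' : ∀ y ∈ S, a - d ^ 2 / 2 ≤ ⟪y - c, w - c⟫ := fun y hy =>
      convexHull_min (fun x hx => hpair y hy x hx) (hhalf (y - c)) hw
    have : a - d ^ 2 / 2 ≤ ⟪w - c, w - c⟫ :=
      convexHull_min (fun y hy => (real_inner_comm _ _).trans_ge (hw' y hy)) (hhalf (w - c)) hw
    rwa [real_inner_self_eq_norm_sq, ← dist_eq_norm] at this
  exact closure_minimal hhull
    (isClosed_le continuous_const ((continuous_id.dist continuous_const).pow 2)) hz

end InnerProduct

theorem stmt0_general {H : Type*} [NormedAddCommGroup H] [InnerProductSpace ℝ H] [CompleteSpace H] (A : Set H)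
    (hA : A.Nonempty) (hb : Bornology.IsBounded A) :
    chebRadius A ≤ (1 / Real.sqrt 2) * Metric.diam A := by
  obtain ⟨c, hc⟩ := exists_farthestDist_eq_chebRadius hA hb
  have hsq : chebRadius A ^ 2 ≤ diam A ^ 2 / 2 := le_of_forall_pos_le_add fun ε hε => by
    have := sub_le_dist_sq_of_mem_closure_convexHull (fun x hx => hx.2.le)
      (fun x hx y hy => dist_le_diam_of_mem hb hx.1 hy.1)
      (mem_closure_convexHull_of_farthestDist_eq_chebRadius hA hb hc hε)
    rw [dist_self] at this
    linarith
  have hrhs : (1 / √2 * diam A) ^ 2 = diam A ^ 2 / 2 := by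
    rw [mul_pow, div_pow, Real.sq_sqrt zero_le_two]; ring
  exact (pow_le_pow_iff_left₀ chebRadius_nonneg (by positivity) two_ne_zero).1 (hrhs ▸ hsq)

theorem stmt0 {H : Type*} [NormedAddCommGroup H] [InnerProductSpace ℝ H] [CompleteSpace H] (A : Set H)
    (hA : A.Nonempty) (hb : Bornology.IsBounded A) (hnt : A.Nontrivial) :
    chebRadius A ≤ (1 / Real.sqrt 2) * Metric.diam A :=
  stmt0_general A hA hb
end

section
/- In an n-dimensional real inner product space E, every bounded set A with diameter d(A) = 1 satisfies r_E(A) ≤ √(n/(2(n+1))) (Jung's theorem). -/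
/-!
Jung's theorem via Helly's theorem: the closed balls of radius `r = diam A * √(n / (2(n+1)))`
around the points of `A` meet as soon as any `n + 1` of them do, so it suffices to cover `m ≤ n + 1`
points `x i` at mutual distance `≤ d` by a ball of radius `d * √((m - 1) / (2m))`.

For that, maximise the variance `V w = ∑ w i * ‖x i‖² - ‖∑ w i • x i‖²` over the probability
simplex. Moving mass `t` from a maximiser `l` to a vertex `j` changes `V` by `t (Q - V l) - t² Q`,
where `Q = ‖x j - y‖²` and `y` is the barycentre of `l`; maximality forces `Q ≤ V l`. On the other
hand `2 V w = ∑ w i w k ‖x i - x k‖² ≤ d² (1 - ∑ w i²) ≤ d² (1 - 1/m)`.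
-/

open Finset

section Variance

variable {ι E : Type*} [Fintype ι] [NormedAddCommGroup E] [InnerProductSpace ℝ E]

noncomputable def weightedVariance (x : ι → E) (w : ι → ℝ) : ℝ :=
  ∑ i, w i * ‖x i‖ ^ 2 - ‖∑ i, w i • x i‖ ^ 2

lemma two_mul_weightedVariance (x : ι → E) {w : ι → ℝ} (hw : ∑ i, w i = 1) :
    2 * weightedVariance x w = ∑ i, ∑ k, w i * w k * ‖x i - x k‖ ^ 2 := by
  have hexpand : ∀ i k, w i * w k * ‖x i - x k‖ ^ 2
      = w i * ‖x i‖ ^ 2 * w k + w i * (w k * ‖x k‖ ^ 2) - 2 * (w i * w k * inner ℝ (x k) (x i)) :=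
    fun i k => by rw [norm_sub_sq_real, real_inner_comm]; ring
  have hnorm : ‖∑ i, w i • x i‖ ^ 2 = ∑ i, ∑ k, w i * w k * inner ℝ (x k) (x i) := by
    simp only [← real_inner_self_eq_norm_sq, sum_inner, inner_sum, real_inner_smul_left,
      real_inner_smul_right, mul_assoc]
  simp only [hexpand, sum_add_distrib, sum_sub_distrib, ← mul_sum, ← sum_mul, hw, one_mul,
    mul_one, ← hnorm, weightedVariance]
  ring

lemma weightedVariance_le {x : ι → E} {d : ℝ} (hx : ∀ i j, ‖x i - x j‖ ≤ d) {w : ι → ℝ}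
    (hw : w ∈ stdSimplex ℝ ι) :
    weightedVariance x w ≤ d ^ 2 * ((Fintype.card ι - 1) / (2 * Fintype.card ι)) := by
  classical
  obtain ⟨hw0, hw1⟩ := hw
  have hcard : (0 : ℝ) < Fintype.card ι := by
    have : Nonempty ι := by
      by_contra h
      simp [not_nonempty_iff.mp h] at hw1
    exact_mod_cast Fintype.card_pos
  have hterm : ∀ i k, w i * w k * ‖x i - x k‖ ^ 2
      ≤ d ^ 2 * (w i * w k - if i = k then w i ^ 2 else 0) := by
    intro i k
    split_ifs with h
    · simp [h, sq]
    · rw [sub_zero, mul_comm (d ^ 2)]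
      exact mul_le_mul_of_nonneg_left (pow_le_pow_left₀ (norm_nonneg _) (hx i k) 2)
        (mul_nonneg (hw0 i) (hw0 k))
  have hsq : 1 ≤ Fintype.card ι * ∑ i, w i ^ 2 := by
    simpa [hw1] using sq_sum_le_card_mul_sum_sq (s := univ) (f := w)
  have h2V : 2 * weightedVariance x w ≤ d ^ 2 * (1 - ∑ i, w i ^ 2) :=
    calc 2 * weightedVariance x w = ∑ i, ∑ k, w i * w k * ‖x i - x k‖ ^ 2 :=
          two_mul_weightedVariance x hw1
      _ ≤ ∑ i, ∑ k, d ^ 2 * (w i * w k - if i = k then w i ^ 2 else 0) :=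
          sum_le_sum fun i _ => sum_le_sum fun k _ => hterm i k
      _ = d ^ 2 * (1 - ∑ i, w i ^ 2) := by
          simp only [← mul_sum, sum_sub_distrib, ← sum_mul, hw1, one_mul, sum_ite_eq,
            mem_univ, if_true]
  rw [mul_div_assoc', le_div_iff₀ (by positivity)]
  nlinarith [sq_nonneg d]

lemma weightedVariance_one_sub_smul_add_smul_single [DecidableEq ι] (x : ι → E) (w : ι → ℝ)
    (j : ι) (t : ℝ) :
    weightedVariance x ((1 - t) • w + t • Pi.single j 1)
      = weightedVariance x w + t * (‖x j - ∑ i, w i • x i‖ ^ 2 - weightedVariance x w)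
        - t ^ 2 * ‖x j - ∑ i, w i • x i‖ ^ 2 := by
  set y := ∑ i, w i • x i
  have hmean : ∑ i, ((1 - t) • w + t • Pi.single j 1 : ι → ℝ) i • x i = y + t • (x j - y) := by
    simp only [Pi.add_apply, Pi.smul_apply, smul_eq_mul, add_smul, mul_smul, sum_add_distrib,
      ← smul_sum, Pi.single_apply, ite_smul, one_smul, zero_smul, sum_ite_eq', mem_univ, if_true]
    rw [smul_sub, sub_smul, one_smul]
    abel
  have hsq : ∑ i, ((1 - t) • w + t • Pi.single j 1 : ι → ℝ) i * ‖x i‖ ^ 2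
      = (1 - t) * ∑ i, w i * ‖x i‖ ^ 2 + t * ‖x j‖ ^ 2 := by
    simp only [Pi.add_apply, Pi.smul_apply, smul_eq_mul, add_mul, mul_assoc, sum_add_distrib,
      ← mul_sum, Pi.single_apply, ite_mul, one_mul, zero_mul, sum_ite_eq', mem_univ, if_true]
  simp only [weightedVariance, hmean, hsq]
  rw [norm_add_sq_real, norm_smul, real_inner_smul_right, norm_sub_sq_real (x j) y,
    inner_sub_right, real_inner_self_eq_norm_sq, real_inner_comm, Real.norm_eq_abs, mul_pow,
    sq_abs, norm_sub_sq_real (x j) y]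
  ring

lemma norm_sub_sq_le_weightedVariance_of_isMaxOn {x : ι → E} {l : ι → ℝ}
    (hl : l ∈ stdSimplex ℝ ι) (hmax : IsMaxOn (weightedVariance x) (stdSimplex ℝ ι) l) (j : ι) :
    ‖x j - ∑ i, l i • x i‖ ^ 2 ≤ weightedVariance x l := by
  classical
  set Q := ‖x j - ∑ i, l i • x i‖ ^ 2
  have hstep : ∀ t : ℝ, 0 ≤ t → t ≤ 1 → t * (Q - weightedVariance x l) ≤ t ^ 2 * Q := by
    intro t ht0 ht1
    have hmem : (1 - t) • l + t • Pi.single j 1 ∈ stdSimplex ℝ ι :=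
      convex_stdSimplex ℝ ι hl (single_mem_stdSimplex ℝ j) (by linarith) ht0 (by ring)
    have := hmax hmem
    rw [Set.mem_ofPred_eq, weightedVariance_one_sub_smul_add_smul_single x l] at this
    linarith
  by_contra! hlt
  obtain ⟨c, hc0, hcQ⟩ := exists_pos_mul_lt (sub_pos.mpr hlt) Q
  have ht : 0 < min c 1 := lt_min hc0 one_pos
  have hQ : Q - weightedVariance x l ≤ min c 1 * Q :=
    le_of_mul_le_mul_left (by nlinarith [hstep _ ht.le (min_le_right _ _)]) ht
  have : min c 1 * Q ≤ c * Q := mul_le_mul_of_nonneg_right (min_le_left _ _) (sq_nonneg _)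
  linarith

lemma exists_forall_norm_sub_le_mul_sqrt [Nonempty ι] {x : ι → E} {d : ℝ}
    (hx : ∀ i j, ‖x i - x j‖ ≤ d) :
    ∃ y, ∀ j, ‖x j - y‖ ≤ d * √((Fintype.card ι - 1) / (2 * Fintype.card ι)) := by
  classical
  obtain ⟨l, hl, hmax⟩ := (isCompact_stdSimplex ℝ ι).exists_isMaxOn
    ⟨_, single_mem_stdSimplex ℝ (Classical.arbitrary ι)⟩
    (by unfold weightedVariance; fun_prop : Continuous (weightedVariance x)).continuousOn
  refine ⟨∑ i, l i • x i, fun j => ?_⟩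
  have hd : 0 ≤ d := by simpa using hx j j
  have hcard : (1 : ℝ) ≤ Fintype.card ι := by exact_mod_cast Fintype.card_pos
  rw [← pow_le_pow_iff_left₀ (norm_nonneg _) (by positivity) two_ne_zero, mul_pow,
    Real.sq_sqrt (div_nonneg (by linarith) (by positivity))]
  exact (norm_sub_sq_le_weightedVariance_of_isMaxOn hl hmax j).trans (weightedVariance_le hx hl)

end Variance

lemma exists_forall_norm_sub_le_diam_mul_sqrt {E : Type*} [NormedAddCommGroup E]
    [InnerProductSpace ℝ E] [FiniteDimensional ℝ E] {A : Set E} (hA : Bornology.IsBounded A) :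
    ∃ y, ∀ a ∈ A, ‖a - y‖ ≤
      Metric.diam A * √(Module.finrank ℝ E / (2 * (Module.finrank ℝ E + 1))) := by
  set r := Metric.diam A * √(Module.finrank ℝ E / (2 * (Module.finrank ℝ E + 1)))
  suffices h : (⋂ a : A, Metric.closedBall (a : E) r).Nonempty by
    obtain ⟨y, hy⟩ := h
    refine ⟨y, fun a ha => ?_⟩
    rw [← dist_eq_norm, dist_comm]
    exact Set.mem_iInter.mp hy ⟨a, ha⟩
  refine Convex.helly_theorem_compact' (fun _ => convex_closedBall _ _)
    (fun _ => isCompact_closedBall _ _) fun I hI => ?_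
  rcases I.eq_empty_or_nonempty with rfl | hI0
  · simp
  have : Nonempty I := hI0.to_subtype
  obtain ⟨y, hy⟩ := exists_forall_norm_sub_le_mul_sqrt (x := fun i : I => ((i : A) : E))
    fun i j => by rw [← dist_eq_norm]; exact Metric.dist_le_diam_of_mem hA (i : A).2 (j : A).2
  refine ⟨y, Set.mem_iInter₂.mpr fun a ha => ?_⟩
  rw [Metric.mem_closedBall, dist_comm, dist_eq_norm]
  refine (hy ⟨a, ha⟩).trans (mul_le_mul_of_nonneg_left (Real.sqrt_le_sqrt ?_) Metric.diam_nonneg)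
  rw [Fintype.card_coe]
  have h1 : (1 : ℝ) ≤ #I := by exact_mod_cast hI0.card_pos
  have h2 : (#I : ℝ) ≤ Module.finrank ℝ E + 1 := by exact_mod_cast hI
  rw [div_le_div_iff₀ (by positivity) (by positivity)]
  nlinarith

lemma chebRadius_le_of_forall_norm_sub_le {H : Type*} [NormedAddCommGroup H] {A : Set H} {y : H}
    {r : ℝ} (hr : 0 ≤ r) (hy : ∀ a ∈ A, ‖a - y‖ ≤ r) : chebRadius A ≤ r :=
  (ciInf_le ⟨0, by rintro _ ⟨z, rfl⟩; exact Real.iSup_nonneg fun _ => norm_nonneg _⟩ y).trans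
    (Real.iSup_le (fun a => hy a a.2) hr)

theorem stmt1 {E : Type*} [NormedAddCommGroup E] [InnerProductSpace ℝ E]
    [FiniteDimensional ℝ E] (n : ℕ) (hn : Module.finrank ℝ E = n)
    (A : Set E) (hb : Bornology.IsBounded A) (hd : Metric.diam A = 1) :
    chebRadius A ≤ Real.sqrt (n / (2 * (n + 1))) := by
  obtain ⟨y, hy⟩ := exists_forall_norm_sub_le_diam_mul_sqrt hb
  rw [hd, one_mul, hn] at hy
  exact chebRadius_le_of_forall_norm_sub_le (Real.sqrt_nonneg _) hy
end

section
/- For a nonempty bounded subset A of a real Hilbert space H, the Chebyshev center of A in H belongs to the closed convex hull of A; consequently the relative Chebyshev radius of A with respect to the closed convex hull of A equals r_H(A). -/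
open RealInnerProductSpace
noncomputable def chebRadiusIn {H : Type*} [NormedAddCommGroup H] (B A : Set H) : ℝ :=
  ⨅ y : B, ⨆ x : A, ‖(x : H) - (y : H)‖

theorem stmt3 {H : Type*} [NormedAddCommGroup H] [InnerProductSpace ℝ H] [CompleteSpace H] (A : Set H)
    (hA : A.Nonempty) (hb : Bornology.IsBounded A) (c : H)
    (hc : (⨆ x : A, ‖(x : H) - c‖) = chebRadius A) :
    c ∈ closure (convexHull ℝ A) ∧
      chebRadiusIn (closure (convexHull ℝ A)) A = chebRadius A := by
  haveI : Nonempty A := hA.to_subtype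
  obtain ⟨R, hR⟩ := hb.exists_norm_le
  set r := chebRadius A with hr
  -- boundedness of the sup families
  have hbdd : ∀ y : H, BddAbove (Set.range fun x : A => ‖(x : H) - y‖) := by
    intro y
    refine ⟨R + ‖y‖, Set.forall_mem_range.2 fun x => ?_⟩
    calc ‖(x : H) - y‖ ≤ ‖(x : H)‖ + ‖y‖ := norm_sub_le _ _
      _ ≤ R + ‖y‖ := by have := hR x x.2; linarith
  have hbelow : BddBelow (Set.range fun y : H => ⨆ x : A, ‖(x : H) - y‖) := by
    refine ⟨0, Set.forall_mem_range.2 fun y => ?_⟩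
    exact le_ciSup_of_le (hbdd y) (Classical.arbitrary A) (norm_nonneg _)
  have hr_le : ∀ y : H, r ≤ ⨆ x : A, ‖(x : H) - y‖ := fun y => ciInf_le hbelow y
  have hr0 : 0 ≤ r := hc ▸ le_ciSup_of_le (hbdd c) (Classical.arbitrary A) (norm_nonneg _)
  have hxc : ∀ x : A, ‖(x : H) - c‖ ≤ r := fun x => hc ▸ le_ciSup (hbdd c) x
  set K := closure (convexHull ℝ A) with hK
  have hKconv : Convex ℝ K := (convex_convexHull ℝ A).closure
  have hAK : A ⊆ K := (subset_convexHull ℝ A).trans subset_closure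
  have hKne : K.Nonempty := hA.mono hAK
  obtain ⟨p, hpK, hproj⟩ := exists_norm_eq_iInf_of_complete_convex hKne
    isClosed_closure.isComplete hKconv c
  have hinner : ∀ w ∈ K, ⟪c - p, w - p⟫ ≤ 0 :=
    (norm_eq_iInf_iff_real_inner_le_zero hKconv hpK).1 hproj
  set d := ‖c - p‖ with hd
  -- key estimate: for x ∈ A, ‖x - p‖² + d² ≤ ‖x - c‖² ≤ r²
  have key : ∀ x : A, ‖(x : H) - p‖ ^ 2 + d ^ 2 ≤ r ^ 2 := by
    intro x
    have h1 : ⟪c - p, (x : H) - p⟫ ≤ 0 := hinner _ (hAK x.2)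
    have h2 : ‖(x : H) - c‖ ^ 2 =
        ‖(x : H) - p‖ ^ 2 - 2 * ⟪(x : H) - p, c - p⟫ + ‖c - p‖ ^ 2 := by
      have := @norm_sub_sq_real H _ _ ((x : H) - p) (c - p)
      rw [show (x : H) - p - (c - p) = (x : H) - c by abel] at this
      linarith
    have h3 : ‖(x : H) - c‖ ^ 2 ≤ r ^ 2 := by
      have := hxc x
      nlinarith [norm_nonneg ((x : H) - c)]
    rw [real_inner_comm] at h2
    nlinarith
  have hcp : c = p := by
    have hsup : (⨆ x : A, ‖(x : H) - p‖) ≤ Real.sqrt (r ^ 2 - d ^ 2) := by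
      refine ciSup_le fun x => ?_
      have := key x
      have h4 : ‖(x : H) - p‖ ^ 2 ≤ r ^ 2 - d ^ 2 := by linarith
      calc ‖(x : H) - p‖ = Real.sqrt (‖(x : H) - p‖ ^ 2) :=
            (Real.sqrt_sq (norm_nonneg _)).symm
        _ ≤ Real.sqrt (r ^ 2 - d ^ 2) := Real.sqrt_le_sqrt h4
    have hrle : r ≤ Real.sqrt (r ^ 2 - d ^ 2) := le_trans (hr_le p) hsup
    have : r ^ 2 ≤ r ^ 2 - d ^ 2 := by
      have := Real.sq_sqrt (show (0:ℝ) ≤ r ^ 2 - d ^ 2 by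
        nlinarith [key (Classical.arbitrary A), sq_nonneg ‖((Classical.arbitrary A : A) : H) - p‖])
      nlinarith [Real.sqrt_nonneg (r ^ 2 - d ^ 2)]
    have hd0 : d = 0 := by nlinarith [sq_nonneg d, norm_nonneg (c - p)]
    have := norm_sub_eq_zero_iff.mp hd0
    exact sub_eq_zero.mp (by simpa [hd] using hd0)
  have hcK : c ∈ K := hcp ▸ hpK
  refine ⟨hcK, ?_⟩
  haveI : Nonempty K := hKne.to_subtype
  refine le_antisymm ?_ (le_ciInf fun y => hr_le y)
  have hbK : BddBelow (Set.range fun y : K => ⨆ x : A, ‖(x : H) - (y : H)‖) :=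
    ⟨0, Set.forall_mem_range.2 fun y =>
      le_ciSup_of_le (hbdd y) (Classical.arbitrary A) (norm_nonneg _)⟩
  have h1 : chebRadiusIn K A ≤ ⨆ x : A, ‖(x : H) - ((⟨c, hcK⟩ : K) : H)‖ :=
    ciInf_le hbK (⟨c, hcK⟩ : K)
  exact h1.trans (le_of_eq hc)
end

section
/- Let A be a nonempty bounded subset of a real Hilbert space H with Chebyshev center c and Chebyshev radius r > 0. Then for every ε ∈ (0, r), the Chebyshev center c lies in the closed convex hull of A_ε := A \ B(c, r − ε), and r_H(A_ε) = r. -/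
open scoped RealInnerProductSpace
open Bornology Metric

section Aux

variable {H : Type*} [NormedAddCommGroup H] [InnerProductSpace ℝ H] [CompleteSpace H]

lemma bddCheb {A : Set H} (hb : IsBounded A) (y : H) :
    BddAbove (Set.range fun x : A => ‖(x : H) - y‖) := by
  obtain ⟨M, hM⟩ := hb.subset_closedBall 0
  refine ⟨M + ‖y‖, ?_⟩
  rintro _ ⟨x, rfl⟩
  have hx : ‖(x : H)‖ ≤ M := by simpa using hM x.2
  calc ‖(x : H) - y‖ ≤ ‖(x : H)‖ + ‖y‖ := norm_sub_le _ _
    _ ≤ M + ‖y‖ := by linarith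

lemma supNonneg {A : Set H} (hA : A.Nonempty) (hb : IsBounded A) (y : H) :
    0 ≤ ⨆ x : A, ‖(x : H) - y‖ := by
  obtain ⟨x, hx⟩ := hA
  exact le_trans (norm_nonneg _) (le_ciSup (bddCheb hb y) ⟨x, hx⟩)

lemma cheb_le {A : Set H} (hA : A.Nonempty) (hb : IsBounded A) (y : H) :
    chebRadius A ≤ ⨆ x : A, ‖(x : H) - y‖ :=
  ciInf_le ⟨0, by rintro _ ⟨z, rfl⟩; exact supNonneg hA hb z⟩ y

lemma nonempty_Aeps {A : Set H} (hA : A.Nonempty) (hb : IsBounded A) {c : H} {r : ℝ}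
    (hsup : (⨆ x : A, ‖(x : H) - c‖) = r) {ρ : ℝ} (hρ : ρ < r) :
    (A \ Metric.closedBall c ρ).Nonempty := by
  haveI : Nonempty A := hA.to_subtype
  by_contra h
  rw [Set.not_nonempty_iff_eq_empty] at h
  have hall : ∀ x ∈ A, ‖x - c‖ ≤ ρ := by
    intro x hx
    by_contra hgt
    push_neg at hgt
    have hmem : x ∈ A \ Metric.closedBall c ρ :=
      ⟨hx, by simp [Metric.mem_closedBall, dist_eq_norm]; linarith⟩
    simp [h] at hmem
  have : (⨆ x : A, ‖(x : H) - c‖) ≤ ρ := ciSup_le fun x => hall x x.2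
  linarith [hsup ▸ this]

lemma exists_inner_ge {S : Set H} (c y : H)
    (hc : c ∈ closure (convexHull ℝ S)) {δ : ℝ} (hδ : 0 < δ) :
    ∃ x ∈ S, -δ ≤ ⟪x - c, c - y⟫ := by
  by_contra h
  push_neg at h
  set g : H →L[ℝ] ℝ := innerSL ℝ (c - y) with hg
  have hkey : ∀ z : H, ⟪z - c, c - y⟫ = g z - g c := by
    intro z
    rw [real_inner_comm]
    simp [hg, inner_sub_right, inner_sub_left]
  have hsub : closure (convexHull ℝ S) ⊆ {z : H | g z ≤ g c - δ} := by
    refine closure_minimal (convexHull_min ?_ ?_) ?_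
    · intro x hx
      have h1 := (h x hx).le
      rw [hkey x] at h1
      simpa using by linarith
    · exact convex_halfSpace_le ⟨g.map_add, g.map_smul⟩ _
    · exact IsClosed.preimage g.continuous isClosed_Iic
  have := hsub hc
  simp only [Set.mem_setOf_eq] at this
  linarith

lemma center_mem {A : Set H} (hA : A.Nonempty) (hb : IsBounded A) {c : H} {r : ℝ}
    (hr : r = chebRadius A) (hrpos : 0 < r)
    (hc : (⨆ x : A, ‖(x : H) - c‖) = chebRadius A)
    {ε : ℝ} (hε0 : 0 < ε) (hεr : ε < r) :
    c ∈ closure (convexHull ℝ (A \ Metric.closedBall c (r - ε))) := by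
  haveI : Nonempty A := hA.to_subtype
  set Aε := A \ Metric.closedBall c (r - ε) with hAεdef
  have hsup : (⨆ x : A, ‖(x : H) - c‖) = r := by rw [hc, ← hr]
  have hle : ∀ x ∈ A, ‖x - c‖ ≤ r := by
    intro x hx
    have := le_ciSup (bddCheb hb c) (⟨x, hx⟩ : A)
    rw [hsup] at this; exact this
  have hAεne : Aε.Nonempty := nonempty_Aeps hA hb hsup (by linarith)
  by_contra hcon
  obtain ⟨f, u, hfu, hufc⟩ := geometric_hahn_banach_closed_point
    ((convex_convexHull ℝ Aε).closure) isClosed_closure hcon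
  set v := (InnerProductSpace.toDual ℝ H).symm f with hv
  have hvz : ∀ z : H, ⟪v, z⟫ = f z := fun z => InnerProductSpace.toDual_symm_apply
  set δ := f c - u with hδdef
  have hδ : 0 < δ := by simp [hδdef]; linarith
  have hinner : ∀ x ∈ Aε, ⟪v, x - c⟫ ≤ -δ := by
    intro x hx
    have hfx : f x < u := hfu x (subset_closure (subset_convexHull ℝ Aε hx))
    have : ⟪v, x - c⟫ = f x - f c := by rw [hvz, map_sub]
    rw [this, hδdef]; linarith
  have hvne : v ≠ 0 := by
    intro hvz0
    obtain ⟨x₀, hx₀⟩ := hAεne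
    have := hinner x₀ hx₀
    rw [hvz0] at this
    simp at this
    linarith
  have hvpos : 0 < ‖v‖ := norm_pos_iff.mpr hvne
  set t := min (δ / ‖v‖ ^ 2) (ε / (2 * ‖v‖)) with htdef
  have ht0 : 0 < t := lt_min (div_pos hδ (by positivity)) (by positivity)
  have ht1 : t * ‖v‖ ^ 2 ≤ δ := by
    have h1 : t ≤ δ / ‖v‖ ^ 2 := min_le_left _ _
    rw [le_div_iff₀ (by positivity)] at h1
    linarith
  have htv : t * ‖v‖ ≤ ε / 2 := by
    have h1 : t ≤ ε / (2 * ‖v‖) := min_le_right _ _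
    rw [le_div_iff₀ (by positivity)] at h1
    linarith
  set y := c - t • v with hy
  have hxy : ∀ x : H, x - y = (x - c) + t • v := by intro x; rw [hy]; abel
  have hsq : ∀ x ∈ Aε, ‖x - y‖ ^ 2 ≤ r ^ 2 - t * δ := by
    intro x hx
    have hnorm : ‖x - c‖ ≤ r := hle x hx.1
    have hin : ⟪x - c, t • v⟫ = t * ⟪v, x - c⟫ := by
      rw [real_inner_smul_right, real_inner_comm]
    have hiv := hinner x hx
    have hnv : ‖t • v‖ ^ 2 = t * (t * ‖v‖ ^ 2) := by
      rw [norm_smul]; simp [abs_of_pos ht0]; ring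
    calc ‖x - y‖ ^ 2 = ‖(x - c) + t • v‖ ^ 2 := by rw [hxy]
      _ = ‖x - c‖ ^ 2 + 2 * ⟪x - c, t • v⟫ + ‖t • v‖ ^ 2 := norm_add_sq_real _ _
      _ ≤ r ^ 2 + 2 * (t * (-δ)) + t * δ := by
          rw [hin, hnv]
          have h2 : t * ⟪v, x - c⟫ ≤ t * (-δ) := by
            apply mul_le_mul_of_nonneg_left hiv ht0.le
          have h3 : t * (t * ‖v‖ ^ 2) ≤ t * δ := mul_le_mul_of_nonneg_left ht1 ht0.le
          have h4 : ‖x - c‖ ^ 2 ≤ r ^ 2 := by nlinarith [norm_nonneg (x - c)]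
          linarith
      _ = r ^ 2 - t * δ := by ring
  have hne0 : 0 ≤ r ^ 2 - t * δ := by
    obtain ⟨x₀, hx₀⟩ := hAεne
    exact le_trans (by positivity) (hsq x₀ hx₀)
  set s := max (Real.sqrt (r ^ 2 - t * δ)) (r - ε / 2) with hs
  have hslt : s < r := by
    apply max_lt
    · have : Real.sqrt (r ^ 2 - t * δ) < Real.sqrt (r ^ 2) := by
        apply Real.sqrt_lt_sqrt hne0
        nlinarith
      rwa [Real.sqrt_sq hrpos.le] at this
    · linarith
  have hsupy : (⨆ x : A, ‖(x : H) - y‖) ≤ s := by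
    apply ciSup_le
    rintro ⟨x, hxA⟩
    by_cases hxb : x ∈ Metric.closedBall c (r - ε)
    · have h1 : ‖x - c‖ ≤ r - ε := by
        rw [Metric.mem_closedBall, dist_eq_norm] at hxb; exact hxb
      have : ‖(x : H) - y‖ ≤ ‖x - c‖ + ‖t • v‖ := by
        rw [hxy]; exact norm_add_le _ _
      have h2 : ‖t • v‖ = t * ‖v‖ := by rw [norm_smul]; simp [abs_of_pos ht0]
      refine le_trans ?_ (le_max_right _ _)
      rw [h2] at this
      linarith
    · have hx : x ∈ Aε := ⟨hxA, hxb⟩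
      refine le_trans ?_ (le_max_left _ _)
      rw [show ‖(x : H) - y‖ = Real.sqrt (‖(x : H) - y‖ ^ 2) by
        rw [Real.sqrt_sq (norm_nonneg _)]]
      exact Real.sqrt_le_sqrt (hsq x hx)
  have := le_trans (hr ▸ cheb_le hA hb y) hsupy
  linarith

end Aux

theorem stmt4 {H : Type*} [NormedAddCommGroup H] [InnerProductSpace ℝ H] [CompleteSpace H] (A : Set H)
    (hA : A.Nonempty) (hb : Bornology.IsBounded A) (c : H) (r : ℝ)
    (hr : r = chebRadius A) (hrpos : 0 < r)
    (hc : (⨆ x : A, ‖(x : H) - c‖) = chebRadius A)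
    (ε : ℝ) (hε : ε ∈ Set.Ioo 0 r) :
    c ∈ closure (convexHull ℝ (A \ Metric.closedBall c (r - ε))) ∧
      chebRadius (A \ Metric.closedBall c (r - ε)) = r := by
  obtain ⟨hε0, hεr⟩ := hε
  haveI : Nonempty A := hA.to_subtype
  set Aε := A \ Metric.closedBall c (r - ε) with hAεdef
  have hsup : (⨆ x : A, ‖(x : H) - c‖) = r := by rw [hc, ← hr]
  have hle : ∀ x ∈ A, ‖x - c‖ ≤ r := by
    intro x hx
    have := le_ciSup (bddCheb hb c) (⟨x, hx⟩ : A)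
    rw [hsup] at this; exact this
  have hAεne : Aε.Nonempty := nonempty_Aeps hA hb hsup (by linarith)
  haveI : Nonempty ↥Aε := hAεne.to_subtype
  have hbε : IsBounded Aε := hb.subset Set.diff_subset
  refine ⟨center_mem hA hb hr hrpos hc hε0 hεr, le_antisymm ?_ ?_⟩
  · -- chebRadius Aε ≤ r
    refine le_trans (cheb_le hAεne hbε c) (ciSup_le fun x => hle x x.2.1)
  · -- r ≤ chebRadius Aε
    rw [chebRadius]
    refine le_ciInf fun y => ?_
    set S := ⨆ x : ↥Aε, ‖(x : H) - y‖ with hSdef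
    have hS0 : 0 ≤ S := supNonneg hAεne hbε y
    by_contra hlt
    push_neg at hlt
    set ε' := min ((r - S) / 2) (ε / 2) with hε'
    have hε'0 : 0 < ε' := lt_min (by linarith) (by linarith)
    have hε'ε : ε' < ε := lt_of_le_of_lt (min_le_right _ _) (by linarith)
    have hε'r : ε' < r := by linarith
    have hchull : c ∈ closure (convexHull ℝ (A \ Metric.closedBall c (r - ε'))) :=
      center_mem hA hb hr hrpos hc hε'0 hε'r
    have hsubε : A \ Metric.closedBall c (r - ε') ⊆ Aε := by
      apply Set.diff_subset_diff_right
      apply Metric.closedBall_subset_closedBall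
      linarith
    have hkey2 : (r - ε') ^ 2 ≤ S ^ 2 := by
      refine le_of_forall_pos_le_add fun δ hδ => ?_
      obtain ⟨x, hxA', hxin⟩ := exists_inner_ge c y hchull (δ := δ / 2) (by linarith)
      have hxAε : x ∈ Aε := hsubε hxA'
      have hxn : r - ε' ≤ ‖x - c‖ := by
        have := hxA'.2
        rw [Metric.mem_closedBall, dist_eq_norm, not_le] at this
        linarith
      have hxS : ‖x - y‖ ≤ S := le_ciSup (bddCheb hbε y) (⟨x, hxAε⟩ : ↥Aε)
      have hsq : ‖x - y‖ ^ 2 = ‖x - c‖ ^ 2 + 2 * ⟪x - c, c - y⟫ + ‖c - y‖ ^ 2 := by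
        rw [show x - y = (x - c) + (c - y) by abel]
        exact norm_add_sq_real _ _
      nlinarith [norm_nonneg (c - y), norm_nonneg (x - y), norm_nonneg (x - c),
        sq_nonneg (‖c - y‖)]
    have hfin : r - ε' ≤ S := by nlinarith [hS0]
    have : ε' ≤ (r - S) / 2 := min_le_left _ _
    linarith
end

section
/- Let A be a relatively compact subset of a real Hilbert space H with d(A) > 0. Then r_H(A) < (1/√2)·d(A) (Gulevich's theorem). -/
open scoped RealInnerProductSpace
open Metric Finset

lemma sq_sum_le_card_mul_sum_sum_ite_eq {ι κ : Type*} [Fintype ι] [DecidableEq κ] (w : ι → ℝ)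
    (s : Finset κ) (g : ι → κ) (hg : ∀ i, g i ∈ s) :
    (∑ i, w i) ^ 2 ≤ #s * ∑ i, ∑ j, if g i = g j then w i * w j else 0 := by
  have hmaps : ∀ i ∈ (univ : Finset ι), g i ∈ s := fun i _ => hg i
  have hfibers : ∑ i, ∑ j, (if g i = g j then w i * w j else 0)
      = ∑ m ∈ s, (∑ i with g i = m, w i) ^ 2 := by
    rw [← sum_fiberwise_of_maps_to hmaps]
    refine sum_congr rfl fun m _ => ?_
    rw [sq, sum_mul_sum]
    refine sum_congr rfl fun i hi => ?_
    simp only [(mem_filter.1 hi).2, sum_filter, eq_comm]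
  rw [hfibers, ← sum_fiberwise_of_maps_to hmaps]
  exact sq_sum_le_card_mul_sum_sq

lemma sum_sum_mul_norm_sub_sq_le_of_cover {E ι κ : Type*} [SeminormedAddCommGroup E] [Fintype ι]
    [DecidableEq κ] {w : ι → ℝ} (hw₀ : ∀ i, 0 ≤ w i) (hw₁ : ∑ i, w i = 1) {z : ι → E} {D : ℝ}
    (hD : ∀ i j, ‖z i - z j‖ ≤ D) (s : Finset κ) (g : ι → κ) (hg : ∀ i, g i ∈ s)
    (hgD : ∀ i j, g i = g j → ‖z i - z j‖ ≤ D / 2) :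
    #s * ∑ i, ∑ j, w i * w j * ‖z i - z j‖ ^ 2 ≤ (#s - 3 / 4) * D ^ 2 := by
  set β := ∑ i, ∑ j, if g i = g j then w i * w j else 0
  have hβ : 1 ≤ #s * β := by simpa [hw₁] using sq_sum_le_card_mul_sum_sum_ite_eq w s g hg
  have hpair : ∀ i j, w i * w j * ‖z i - z j‖ ^ 2
      ≤ w i * w j * D ^ 2 - 3 / 4 * D ^ 2 * (if g i = g j then w i * w j else 0) := by
    intro i j
    have hw := mul_nonneg (hw₀ i) (hw₀ j)
    have hz := norm_nonneg (z i - z j)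
    split_ifs with hij
    · nlinarith [mul_le_mul_of_nonneg_left (pow_le_pow_left₀ hz (hgD i j hij) 2) hw]
    · nlinarith [mul_le_mul_of_nonneg_left (pow_le_pow_left₀ hz (hD i j) 2) hw]
  have hsum : ∑ i, ∑ j, w i * w j * ‖z i - z j‖ ^ 2 ≤ D ^ 2 - 3 / 4 * D ^ 2 * β := by
    refine (sum_le_sum fun i _ => sum_le_sum fun j _ => hpair i j).trans_eq ?_
    simp only [sum_sub_distrib, ← sum_mul, ← mul_sum, hw₁]; ring
  nlinarith [sq_nonneg D]

section SupDist

variable {E : Type*} [SeminormedAddCommGroup E] {A : Set E} {x y : E} {b : ℝ}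

noncomputable def supDist (A : Set E) (y : E) : ℝ := ⨆ x : A, ‖(x : E) - y‖

def IsChebyshevCenter (A : Set E) (c : E) : Prop := ∀ y, supDist A c ≤ supDist A y

lemma supDist_nonneg : 0 ≤ supDist A y := Real.iSup_nonneg fun _ => norm_nonneg _

lemma norm_sub_le_supDist (hA : Bornology.IsBounded A) (hx : x ∈ A) : ‖x - y‖ ≤ supDist A y := by
  obtain ⟨C, hC⟩ := hA.exists_norm_le
  refine le_ciSup (f := fun x : A => ‖(x : E) - y‖) ⟨C + ‖y‖, ?_⟩ ⟨x, hx⟩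
  rintro _ ⟨x', rfl⟩
  exact (norm_sub_le _ _).trans (by gcongr; exact hC _ x'.2)

lemma supDist_le (hne : A.Nonempty) (h : ∀ x ∈ A, ‖x - y‖ ≤ b) : supDist A y ≤ b :=
  have := hne.to_subtype
  ciSup_le fun x => h x x.2

lemma exists_lt_norm_sub_of_lt_supDist (hne : A.Nonempty) (h : b < supDist A y) :
    ∃ x ∈ A, b < ‖x - y‖ :=
  have := hne.to_subtype
  let ⟨x, hx⟩ := exists_lt_of_lt_ciSup h
  ⟨x, x.2, hx⟩

lemma lipschitzWith_supDist (hne : A.Nonempty) (hA : Bornology.IsBounded A) :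
    LipschitzWith 1 (supDist A) :=
  LipschitzWith.of_le_add fun y y' => supDist_le hne fun x hx =>
    calc ‖x - y‖ ≤ ‖x - y'‖ + ‖y' - y‖ := norm_sub_le_norm_sub_add_norm_sub _ _ _
      _ ≤ supDist A y' + dist y y' := by
        rw [dist_eq_norm, norm_sub_rev y']; gcongr; exact norm_sub_le_supDist hA hx

end SupDist

lemma IsChebyshevCenter.chebRadius_eq {E : Type*} [NormedAddCommGroup E] {A : Set E} {c : E}
    (hc : IsChebyshevCenter A c) : chebRadius A = supDist A c :=
  le_antisymm (ciInf_le ⟨0, by rintro _ ⟨y, rfl⟩; exact supDist_nonneg⟩ c) (le_ciInf hc)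

section InnerProductSpace

variable {H : Type*} [NormedAddCommGroup H] [InnerProductSpace ℝ H]

lemma norm_sub_add_smul_sub_sq_le {x p c : H} (hx : ⟪c - p, x - p⟫ ≤ 0) {s : ℝ} (hs₀ : 0 ≤ s)
    (hs₁ : s ≤ 1) : ‖x - (c + s • (p - c))‖ ^ 2 ≤ ‖x - c‖ ^ 2 - s * ‖c - p‖ ^ 2 := by
  have hsplit : x - (c + s • (p - c)) = (x - c) + s • (c - p) := by
    rw [← neg_sub c p, smul_neg]; abel
  have hinner : ⟪x - c, c - p⟫ = ⟪c - p, x - p⟫ - ‖c - p‖ ^ 2 := by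
    rw [← real_inner_self_eq_norm_sq, ← inner_sub_right, real_inner_comm]; congr 1; abel
  rw [hsplit, norm_add_sq_real, real_inner_smul_right, norm_smul, Real.norm_of_nonneg hs₀, mul_pow,
    hinner]
  nlinarith [mul_nonpos_of_nonneg_of_nonpos hs₀ hx,
    mul_nonneg (mul_nonneg hs₀ (sub_nonneg.2 hs₁)) (sq_nonneg ‖c - p‖)]

lemma sum_sum_mul_norm_sub_sq {ι : Type*} [Fintype ι] {w : ι → ℝ} (hw : ∑ i, w i = 1) (u : ι → H) :
    ∑ i, ∑ j, w i * w j * ‖u i - u j‖ ^ 2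
      = 2 * ∑ i, w i * ‖u i‖ ^ 2 - 2 * ‖∑ i, w i • u i‖ ^ 2 := by
  have hmean : ‖∑ i, w i • u i‖ ^ 2 = ∑ i, ∑ j, w i * w j * ⟪u i, u j⟫ := by
    simp only [← real_inner_self_eq_norm_sq, sum_inner, inner_sum, real_inner_smul_left,
      real_inner_smul_right, mul_assoc]
    exact sum_congr rfl fun i _ => sum_congr rfl fun j _ => by rw [real_inner_comm]
  calc ∑ i, ∑ j, w i * w j * ‖u i - u j‖ ^ 2
      = ∑ i, ∑ j, (w i * ‖u i‖ ^ 2 * w j + w i * (w j * ‖u j‖ ^ 2)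
          - 2 * (w i * w j * ⟪u i, u j⟫)) := by
        refine sum_congr rfl fun i _ => sum_congr rfl fun j _ => ?_
        rw [norm_sub_sq_real]; ring
    _ = 2 * ∑ i, w i * ‖u i‖ ^ 2 - 2 * ‖∑ i, w i • u i‖ ^ 2 := by
        simp only [sum_add_distrib, sum_sub_distrib, ← sum_mul, ← mul_sum, hw, hmean]; ring

variable {A : Set H}

lemma supDist_le_of_inner_le_zero (hne : A.Nonempty) (hA : Bornology.IsBounded A) {v y : H}
    (h : ∀ x ∈ A, ⟪y - v, x - v⟫ ≤ 0) : supDist A v ≤ supDist A y :=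
  supDist_le hne fun x hx => by
    have hsq := norm_sub_add_smul_sub_sq_le (h x hx) zero_le_one le_rfl
    rw [one_smul, add_sub_cancel] at hsq
    have hle : ‖x - v‖ ≤ ‖x - y‖ :=
      (pow_le_pow_iff_left₀ (norm_nonneg _) (norm_nonneg _) two_ne_zero).1
        (hsq.trans (by nlinarith [norm_nonneg (y - v)]))
    exact hle.trans (norm_sub_le_supDist hA hx)

variable [CompleteSpace H] {c : H}

lemma exists_isChebyshevCenter (hne : A.Nonempty) (hA : TotallyBounded A) :
    ∃ c, IsChebyshevCenter A c := by
  set Q := closure (convexHull ℝ A)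
  have hQ : IsCompact Q :=
    (totallyBounded_convexHull.2 hA).closure.isCompact_of_isClosed isClosed_closure
  have hQconv : Convex ℝ Q := (convex_convexHull ℝ A).closure
  have hAQ : A ⊆ Q := (subset_convexHull ℝ A).trans subset_closure
  obtain ⟨c, -, hc⟩ := hQ.exists_isMinOn (hne.mono hAQ)
    (lipschitzWith_supDist hne hA.isBounded).continuous.continuousOn
  refine ⟨c, fun y => ?_⟩
  obtain ⟨v, hvQ, hv⟩ := exists_norm_eq_iInf_of_complete_convex (hne.mono hAQ)
    isClosed_closure.isComplete hQconv y
  have hproj := (norm_eq_iInf_iff_real_inner_le_zero hQconv hvQ).1 hv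
  exact (hc hvQ).trans (supDist_le_of_inner_le_zero hne hA.isBounded fun x hx => hproj x (hAQ hx))

lemma IsChebyshevCenter.mem_closure_convexHull_farSet (hc : IsChebyshevCenter A c)
    (hne : A.Nonempty) (hA : Bornology.IsBounded A) {ε : ℝ} (hε : 0 < ε) :
    c ∈ closure (convexHull ℝ {x ∈ A | supDist A c - ε < ‖x - c‖}) := by
  set r := supDist A c
  set C := closure (convexHull ℝ {x ∈ A | r - ε < ‖x - c‖})
  have hC : ∀ x ∈ A, r - ε < ‖x - c‖ → x ∈ C := fun x hx hxc =>
    subset_closure (subset_convexHull ℝ _ ⟨hx, hxc⟩)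
  obtain ⟨x₀, hx₀A, hx₀⟩ := exists_lt_norm_sub_of_lt_supDist hne (sub_lt_self r hε)
  have hCconv : Convex ℝ C := (convex_convexHull ℝ _).closure
  obtain ⟨p, hpC, hp⟩ := exists_norm_eq_iInf_of_complete_convex ⟨x₀, hC x₀ hx₀A hx₀⟩
    isClosed_closure.isComplete hCconv c
  have hsep := (norm_eq_iInf_iff_real_inner_le_zero hCconv hpC).1 hp
  by_contra hcC
  have hcp : 0 < ‖c - p‖ := norm_pos_iff.2 (sub_ne_zero.2 (ne_of_mem_of_not_mem hpC hcC).symm)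
  have hr : 0 < r :=
    (norm_pos_iff.2 (sub_ne_zero.2 (ne_of_mem_of_not_mem (hC x₀ hx₀A hx₀) hcC))).trans_le
      (norm_sub_le_supDist hA hx₀A)
  set s := min 1 (ε / (2 * ‖c - p‖))
  have hs₀ : 0 < s := lt_min one_pos (by positivity)
  have hsε : s * ‖c - p‖ ≤ ε / 2 := by
    calc s * ‖c - p‖ ≤ ε / (2 * ‖c - p‖) * ‖c - p‖ := by gcongr; exact min_le_right _ _
      _ = ε / 2 := by field_simp
  -- far points of `A` get closer by the separation `hsep`, near ones have `ε / 2` to spare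
  have hmove : ∀ x ∈ A,
      ‖x - (c + s • (p - c))‖ ≤ max (r - ε / 2) √(r ^ 2 - s * ‖c - p‖ ^ 2) := by
    intro x hx
    by_cases hxc : r - ε < ‖x - c‖
    · refine le_max_of_le_right (Real.le_sqrt_of_sq_le ?_)
      have := norm_sub_add_smul_sub_sq_le (hsep x (hC x hx hxc)) hs₀.le (min_le_left _ _)
      nlinarith [norm_sub_le_supDist (y := c) hA hx, norm_nonneg (x - c)]
    · refine le_max_of_le_left ?_
      calc ‖x - (c + s • (p - c))‖ ≤ ‖x - c‖ + s * ‖c - p‖ := by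
            rw [← sub_sub, norm_sub_rev c, ← norm_smul_of_nonneg hs₀.le]
            exact norm_sub_le _ _
        _ ≤ r - ε / 2 := by linarith
  have hlt : max (r - ε / 2) √(r ^ 2 - s * ‖c - p‖ ^ 2) < r :=
    max_lt (by linarith) ((Real.sqrt_lt' hr).2 (by nlinarith [mul_pos hs₀ (pow_pos hcp 2)]))
  exact ((hc _).trans (supDist_le hne hmove)).not_gt hlt

lemma IsChebyshevCenter.card_mul_two_mul_sq_sub_le (hc : IsChebyshevCenter A c)
    (hne : A.Nonempty) (hA : Bornology.IsBounded A) {D : ℝ} (hD : ∀ x ∈ A, ∀ y ∈ A, ‖x - y‖ ≤ D)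
    (s : Finset H) (hs : A ⊆ ⋃ y ∈ s, ball y (D / 4)) {ε : ℝ} (hε : 0 < ε)
    (hεr : ε ≤ supDist A c) :
    #s * (2 * supDist A c ^ 2 - 4 * supDist A c * ε) ≤ (#s - 3 / 4) * D ^ 2 := by
  classical
  set r := supDist A c
  obtain ⟨p, hp, hpc⟩ :=
    Metric.mem_closure_iff.1 (hc.mem_closure_convexHull_farSet hne hA hε) ε hε
  obtain ⟨ι, _, w, z, hw₀, hw₁, hz, rfl⟩ := mem_convexHull_iff_exists_fintype.1 hp
  choose g hgs hgz using fun i => Set.mem_iUnion₂.1 (hs (hz i).1)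
  have hcluster := sum_sum_mul_norm_sub_sq_le_of_cover hw₀ hw₁
    (fun i j => hD _ (hz i).1 _ (hz j).1) s g hgs fun i j hij => by
      rw [← dist_eq_norm]
      have := dist_triangle_right (z i) (z j) (g i)
      have := mem_ball.1 (hgz i)
      have := mem_ball.1 (hgz j)
      rw [hij] at *
      linarith
  have hvar := sum_sum_mul_norm_sub_sq hw₁ fun i => z i - c
  simp only [sub_sub_sub_cancel_right] at hvar
  have hfar : (r - ε) ^ 2 ≤ ∑ i, w i * ‖z i - c‖ ^ 2 := by
    calc (r - ε) ^ 2 = ∑ i, w i * (r - ε) ^ 2 := by rw [← sum_mul, hw₁, one_mul]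
      _ ≤ ∑ i, w i * ‖z i - c‖ ^ 2 := by
        gcongr with i
        exacts [hw₀ i, (hz i).2.le]
  have hmean : ‖∑ i, w i • (z i - c)‖ < ε := by
    simpa [smul_sub, sum_sub_distrib, ← sum_smul, hw₁, dist_eq_norm, norm_sub_rev] using hpc
  have hlow : 2 * r ^ 2 - 4 * r * ε ≤ ∑ i, ∑ j, w i * w j * ‖z i - z j‖ ^ 2 := by
    nlinarith [norm_nonneg (∑ i, w i • (z i - c))]
  exact (mul_le_mul_of_nonneg_left hlow (Nat.cast_nonneg _)).trans hcluster

lemma IsChebyshevCenter.two_mul_sq_supDist_lt (hc : IsChebyshevCenter A c) (hne : A.Nonempty)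
    (hA : Bornology.IsBounded A) {D : ℝ} (hD₀ : 0 < D) (hD : ∀ x ∈ A, ∀ y ∈ A, ‖x - y‖ ≤ D)
    (s : Finset H) (hs : A ⊆ ⋃ y ∈ s, ball y (D / 4)) :
    2 * supDist A c ^ 2 < D ^ 2 := by
  rcases (supDist_nonneg (A := A) (y := c)).eq_or_lt with hr | hr
  · rw [← hr]; nlinarith
  set r := supDist A c
  have hN : (0 : ℝ) < #s := by
    obtain ⟨y, hy, -⟩ := Set.mem_iUnion₂.1 (hs hne.some_mem)
    exact Nat.cast_pos.2 (card_pos.2 ⟨y, hy⟩)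
  set ε := min r (D ^ 2 / (16 * r * #s))
  have hbound := hc.card_mul_two_mul_sq_sub_le hne hA hD s hs (ε := ε) (by positivity)
    (min_le_left _ _)
  have hε : 4 * r * ε * #s ≤ D ^ 2 / 4 :=
    calc 4 * r * ε * #s ≤ 4 * r * (D ^ 2 / (16 * r * #s)) * #s := by
          gcongr; exact min_le_right _ _
      _ = D ^ 2 / 4 := by field_simp; ring
  nlinarith

end InnerProductSpace

theorem stmt6 {H : Type*} [NormedAddCommGroup H] [InnerProductSpace ℝ H] [CompleteSpace H] (A : Set H)
    (hA : A.Nonempty) (hc : IsCompact (closure A)) (hd : 0 < Metric.diam A) :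
    chebRadius A < (1 / Real.sqrt 2) * Metric.diam A := by
  have hAtb : TotallyBounded A := hc.totallyBounded.subset subset_closure
  have hAb := hAtb.isBounded
  obtain ⟨c, hcen⟩ := exists_isChebyshevCenter hA hAtb
  obtain ⟨t, -, htfin, hcov⟩ :=
    exists_finite_cover_balls_of_isCompact_closure hc (by positivity : 0 < diam A / 4)
  have hdiam : ∀ x ∈ A, ∀ y ∈ A, ‖x - y‖ ≤ diam A := fun x hx y hy => by
    rw [← dist_eq_norm]; exact dist_le_diam_of_mem hAb hx hy
  have hr := hcen.two_mul_sq_supDist_lt hA hAb hd hdiam htfin.toFinset (by simpa using hcov)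
  rw [hcen.chebRadius_eq, one_div_mul_eq_div, lt_div_iff₀ (by positivity)]
  refine lt_of_pow_lt_pow_left₀ 2 hd.le ?_
  rw [mul_pow, Real.sq_sqrt zero_le_two]
  linarith
end

section
/- Let A be an extremal set in a real Hilbert space H with d(A) = √2. Then for every ε ∈ (0, √2) and every positive integer p, there exist p + 1 points z_1, …, z_{p+1} ∈ A such that ‖z_i − z_j‖ ≥ √2 − ε for all i ≠ j. -/
open Finset RealInnerProductSpace

section ChebyshevRadius

variable {H : Type*} [NormedAddCommGroup H] {A : Set H}

theorem exists_mem_lt_norm_sub_of_lt_chebRadius (hA : A.Nonempty) {r : ℝ}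
    (hr : r < chebRadius A) (y : H) : ∃ x ∈ A, r < ‖x - y‖ := by
  have : Nonempty A := hA.to_subtype
  have hle : chebRadius A ≤ ⨆ x : A, ‖(x : H) - y‖ :=
    ciInf_le ⟨0, by rintro _ ⟨y', rfl⟩; exact Real.iSup_nonneg fun _ => norm_nonneg _⟩ y
  obtain ⟨x, hx⟩ := exists_lt_of_lt_ciSup (hr.trans_le hle)
  exact ⟨x, x.2, hx⟩

theorem exists_forall_norm_sub_lt_of_chebRadius_lt (hA : Bornology.IsBounded A) {r : ℝ}
    (hr : chebRadius A < r) : ∃ c : H, ∀ x ∈ A, ‖x - c‖ < r := by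
  obtain ⟨c, hc⟩ := exists_lt_of_ciInf_lt hr
  obtain ⟨C, hC⟩ := hA.exists_norm_le
  have hbdd : BddAbove (Set.range fun x : A => ‖(x : H) - c‖) := by
    refine ⟨C + ‖c‖, ?_⟩
    rintro _ ⟨x, rfl⟩
    linarith [norm_sub_le (x : H) c, hC x x.2]
  exact ⟨c, fun x hx => (le_ciSup hbdd ⟨x, hx⟩).trans_lt hc⟩

end ChebyshevRadius

theorem Finset.le_sum_add_card_mul_of_forall_neg_le {ι : Type*} (s : Finset ι) {f : ι → ℝ}
    {a : ℝ} (hf : ∀ i ∈ s, -a ≤ f i) {j : ι} (hj : j ∈ s) :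
    f j + a ≤ ∑ i ∈ s, f i + #s * a := by
  have := single_le_sum (f := fun i => f i + a) (fun i hi => by linarith [hf i hi]) hj
  rwa [sum_add_distrib, sum_const, nsmul_eq_mul] at this

theorem one_sub_two_mul_le_sq {a κ : ℝ} (h : 1 - κ ≤ a) : 1 - 2 * κ ≤ a ^ 2 := by
  nlinarith [sq_nonneg (a - 1)]

section InnerProduct

variable {E : Type*} [NormedAddCommGroup E] [InnerProductSpace ℝ E] {u v : E} {κ : ℝ}

theorem neg_two_mul_le_inner_of_norm_sub_le_sqrt_two (hu : 1 - κ ≤ ‖u‖) (hv : 1 - κ ≤ ‖v‖)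
    (huv : ‖u - v‖ ≤ √2) : -(2 * κ) ≤ ⟪u, v⟫ := by
  have huv2 : ‖u - v‖ ^ 2 ≤ 2 := by
    simpa using pow_le_pow_left₀ (norm_nonneg _) huv 2
  rw [norm_sub_sq_real] at huv2
  linarith [one_sub_two_mul_le_sq hu, one_sub_two_mul_le_sq hv]

theorem two_sub_le_norm_sub_sq_of_inner_le {K : ℝ} (hu : 1 - κ ≤ ‖u‖) (hv : 1 - κ ≤ ‖v‖)
    (huv : ⟪u, v⟫ ≤ K) : 2 - 4 * κ - 2 * K ≤ ‖u - v‖ ^ 2 := by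
  rw [norm_sub_sq_real]
  linarith [one_sub_two_mul_le_sq hu, one_sub_two_mul_le_sq hv]

theorem two_mul_inner_le_of_lt_norm_sub_smul {δ t : ℝ} {S : E} (hδ : δ ≤ 1)
    (hu : ‖u‖ ≤ 1 + δ) (hfar : 1 - δ < ‖u - t • S‖) :
    2 * t * ⟪u, S⟫ ≤ 4 * δ + t ^ 2 * ‖S‖ ^ 2 := by
  have h1 : (1 - δ) ^ 2 ≤ ‖u - t • S‖ ^ 2 := pow_le_pow_left₀ (by linarith) hfar.le 2
  have h2 : ‖u‖ ^ 2 ≤ (1 + δ) ^ 2 := pow_le_pow_left₀ (norm_nonneg _) hu 2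
  rw [norm_sub_sq_real, real_inner_smul_right, norm_smul, mul_pow, Real.norm_eq_abs,
    sq_abs] at h1
  nlinarith

end InnerProduct

theorem Pairwise.fin_snoc {α : Type*} {r : α → α → Prop} (hr : ∀ a b, r a b → r b a) {n : ℕ}
    {z : Fin n → α} (hz : Pairwise fun i j => r (z i) (z j)) {x : α} (hx : ∀ i, r x (z i)) :
    Pairwise fun i j =>
      r (Fin.snoc (α := fun _ => α) z x i) (Fin.snoc (α := fun _ => α) z x j) := by
  intro i j hij
  induction i using Fin.lastCases <;> induction j using Fin.lastCases
  · exact absurd rfl hij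
  · simpa using hx _
  · simpa using hr _ _ (hx _)
  · simpa using hz (ne_of_apply_ne Fin.castSucc hij)

section AlmostOrthogonal

variable {H : Type*} [NormedAddCommGroup H] [InnerProductSpace ℝ H] {A : Set H} {c : H}
  {t N : ℝ}

theorem exists_mem_almost_orthogonal (ht : 0 < t) (ht1 : t ≤ 1) (hN : 1 ≤ N)
    (hcov : ∀ x ∈ A, ‖x - c‖ ≤ 1 + t ^ 2) (hfar : ∀ y, ∃ x ∈ A, 1 - t ^ 2 < ‖x - y‖)
    (hdiam : ∀ x ∈ A, ∀ y ∈ A, ‖x - y‖ ≤ √2) {n : ℕ} (hn : (n : ℝ) ≤ N) {z : Fin n → H}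
    (hzA : ∀ i, z i ∈ A) (hz : ∀ i, 1 - 3 * N * t ≤ ‖z i - c‖) :
    ∃ x ∈ A, 1 - 3 * N * t ≤ ‖x - c‖ ∧ ∀ i, ⟪x - c, z i - c⟫ ≤ 8 * N ^ 2 * t := by
  have ht2 : t ^ 2 ≤ N * t := by nlinarith
  set S := ∑ i, (z i - c)
  have hS : ‖S‖ ≤ 2 * N :=
    calc ‖S‖ ≤ ∑ i, ‖z i - c‖ := norm_sum_le _ _
      _ ≤ ∑ _ : Fin n, (2 : ℝ) := sum_le_sum fun i _ => by nlinarith [hcov _ (hzA i)]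
      _ ≤ 2 * N := by simp only [sum_const, card_univ, Fintype.card_fin, nsmul_eq_mul]; linarith
  -- Moving the almost-centre towards the chosen points still leaves a point of `A` at distance
  -- almost `1`; that point is then almost orthogonal to all of them.
  obtain ⟨x, hxA, hx⟩ := hfar (c + t • S)
  rw [show x - (c + t • S) = (x - c) - t • S by abel] at hx
  have htS : ‖t • S‖ ≤ 2 * N * t := by
    rw [norm_smul, Real.norm_of_nonneg ht.le]; nlinarith
  have hnorm : 1 - 3 * N * t ≤ ‖x - c‖ := by linarith [norm_sub_le (x - c) (t • S)]
  have hsum : ⟪x - c, S⟫ ≤ 2 * t + 2 * N ^ 2 * t := by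
    have h := two_mul_inner_le_of_lt_norm_sub_smul (by nlinarith) (hcov x hxA) hx
    have hS2 : ‖S‖ ^ 2 ≤ 4 * N ^ 2 := by nlinarith [norm_nonneg S]
    refine le_of_mul_le_mul_left ?_ (by positivity : 0 < 2 * t)
    nlinarith
  refine ⟨x, hxA, hnorm, fun j => ?_⟩
  have hlow : ∀ i ∈ univ, -(6 * N * t) ≤ ⟪x - c, z i - c⟫ := fun i _ => by
    have := neg_two_mul_le_inner_of_norm_sub_le_sqrt_two hnorm (hz i)
      (by simpa only [sub_sub_sub_cancel_right] using hdiam x hxA _ (hzA i))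
    linarith
  have h := univ.le_sum_add_card_mul_of_forall_neg_le hlow (mem_univ j)
  rw [← inner_sum, card_univ, Fintype.card_fin] at h
  nlinarith

theorem exists_almost_orthogonal_family (ht : 0 < t) (ht1 : t ≤ 1) (hN : 1 ≤ N)
    (hcov : ∀ x ∈ A, ‖x - c‖ ≤ 1 + t ^ 2) (hfar : ∀ y, ∃ x ∈ A, 1 - t ^ 2 < ‖x - y‖)
    (hdiam : ∀ x ∈ A, ∀ y ∈ A, ‖x - y‖ ≤ √2) :
    ∀ n : ℕ, (n : ℝ) ≤ N + 1 → ∃ z : Fin n → H, (∀ i, z i ∈ A) ∧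
      (∀ i, 1 - 3 * N * t ≤ ‖z i - c‖) ∧
      Pairwise fun i j => ⟪z i - c, z j - c⟫ ≤ 8 * N ^ 2 * t
  | 0, _ => ⟨finZeroElim, finZeroElim, finZeroElim, fun i => i.elim0⟩
  | n + 1, hn => by
    obtain ⟨z, hzA, hz, hpair⟩ :=
      exists_almost_orthogonal_family ht ht1 hN hcov hfar hdiam n (by push_cast at hn; linarith)
    obtain ⟨x, hxA, hx, hxz⟩ := exists_mem_almost_orthogonal ht ht1 hN hcov hfar hdiam
      (by push_cast at hn; linarith) hzA hz
    refine ⟨Fin.snoc z x, Fin.lastCases ?_ ?_, Fin.lastCases ?_ ?_,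
      Pairwise.fin_snoc (r := fun u v => ⟪u - c, v - c⟫ ≤ _) ?_ hpair hxz⟩
    · intro u v h
      rwa [real_inner_comm]
    · simpa using hxA
    · simpa using hzA
    · simpa using hx
    · simpa using hz

end AlmostOrthogonal

theorem sqrt_two_sub_le_of_two_sub_le_sq {ε a : ℝ} (hε : 0 ≤ ε) (ha : 0 ≤ a)
    (h : 2 - ε ≤ a ^ 2) : √2 - ε ≤ a := by
  have h2 : √2 ^ 2 = 2 := Real.sq_sqrt zero_le_two
  have h1 : 1 < √2 := by rw [Real.lt_sqrt zero_le_one]; norm_num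
  nlinarith

theorem stmt8_general {H : Type*} [NormedAddCommGroup H] [InnerProductSpace ℝ H] (A : Set H)
    (hb : Bornology.IsBounded A) (hnt : A.Nontrivial)
    (hd : Metric.diam A = Real.sqrt 2) (hr : chebRadius A = 1) :
    ∀ ε ∈ Set.Ioo (0 : ℝ) (Real.sqrt 2), ∀ p : ℕ, 0 < p →
      ∃ z : Fin (p + 1) → H, (∀ i, z i ∈ A) ∧
        ∀ i j, i ≠ j → Real.sqrt 2 - ε ≤ ‖z i - z j‖ := by
  rintro ε ⟨hε, hε2⟩ p hp
  have hp1 : (1 : ℝ) ≤ p := by exact_mod_cast hp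
  set t := ε / (28 * p ^ 2)
  have ht : 0 < t := by positivity
  have hεt : 28 * p ^ 2 * t = ε := by simp only [t]; field_simp
  have ht1 : t ≤ 1 := by
    have : √2 < 2 := by rw [Real.sqrt_lt' two_pos]; norm_num
    nlinarith
  obtain ⟨c, hc⟩ := exists_forall_norm_sub_lt_of_chebRadius_lt hb
    (show chebRadius A < 1 + t ^ 2 by rw [hr]; exact lt_add_of_pos_right 1 (by positivity))
  have hfar := exists_mem_lt_norm_sub_of_lt_chebRadius hnt.nonempty
    (show 1 - t ^ 2 < chebRadius A by rw [hr]; nlinarith)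
  have hdiam : ∀ x ∈ A, ∀ y ∈ A, ‖x - y‖ ≤ √2 := fun x hx y hy => by
    rw [← dist_eq_norm, ← hd]; exact Metric.dist_le_diam_of_mem hb hx hy
  obtain ⟨z, hzA, hz, hpair⟩ := exists_almost_orthogonal_family ht ht1 hp1
    (fun x hx => (hc x hx).le) hfar hdiam (p + 1) (by push_cast; rfl)
  refine ⟨z, hzA, fun i j hij => sqrt_two_sub_le_of_two_sub_le_sq hε.le (norm_nonneg _) ?_⟩
  have hpt : p * t ≤ p ^ 2 * t := by nlinarith
  have h := two_sub_le_norm_sub_sq_of_inner_le (hz i) (hz j) (hpair hij)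
  rw [sub_sub_sub_cancel_right] at h
  linarith

theorem stmt8 {H : Type*} [NormedAddCommGroup H] [InnerProductSpace ℝ H] [CompleteSpace H] (A : Set H)
    (hb : Bornology.IsBounded A) (hnt : A.Nontrivial)
    (hd : Metric.diam A = Real.sqrt 2) (hr : chebRadius A = 1) :
    ∀ ε ∈ Set.Ioo (0 : ℝ) (Real.sqrt 2), ∀ p : ℕ, 0 < p →
      ∃ z : Fin (p + 1) → H, (∀ i, z i ∈ A) ∧
        ∀ i j, i ≠ j → Real.sqrt 2 - ε ≤ ‖z i - z j‖ :=
  stmt8_general A hb hnt hd hr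
end

section
/- Let A be a subset of a real Hilbert space H with d(A) = √2 such that for every ε ∈ (0, √2) and every positive integer p there exist p + 1 points of A at pairwise distances at least √2 − ε. Then r_H(A) = 1, i.e., A is an extremal set. -/
/-! For points `z₁, …, zₙ` and any `y` of an inner product space,
`∑ᵢⱼ ‖zᵢ - zⱼ‖² + 2 ‖∑ᵢ (zᵢ - y)‖² = 2n ∑ᵢ ‖zᵢ - y‖²`.
If the `zᵢ` lie in `A` and are pairwise `β` apart, the double sum is at least `n(n-1)β²`.
Dropping the middle term, some `zᵢ` is at squared distance at least `(1 - 1/n)β²/2` from `y`,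
which bounds `r_H(A)` from below. Taking for `y` a point of `A`, the middle term is `n²` times
the squared distance from `y` to the centroid of the `zᵢ`, so that centroid is within
`√(d(A)² - (1 - 1/n)β²/2)` of all of `A`. As `n → ∞` and `β → √2 = d(A)` both bounds tend to `1`. -/

open Filter Topology

section

variable {H : Type*} [NormedAddCommGroup H] {ι : Type*} [Fintype ι]

theorem le_chebRadius {A : Set H} (hA : Bornology.IsBounded A) {a : ℝ}
    (h : ∀ y, ∃ x ∈ A, a ≤ ‖x - y‖) : a ≤ chebRadius A := by
  refine le_ciInf fun y => ?_
  obtain ⟨x, hx, hxy⟩ := h y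
  obtain ⟨C, hC⟩ := hA.exists_norm_le
  have hbdd : BddAbove (Set.range fun x : A => ‖(x : H) - y‖) := by
    refine ⟨C + ‖y‖, ?_⟩
    rintro r ⟨x, rfl⟩
    exact (norm_sub_le _ _).trans (by linarith [hC x x.2])
  exact hxy.trans (le_ciSup hbdd (⟨x, hx⟩ : A))

theorem chebRadius_le {A : Set H} {y : H} {a : ℝ} (ha : 0 ≤ a) (h : ∀ x ∈ A, ‖x - y‖ ≤ a) :
    chebRadius A ≤ a := by
  have hbdd : BddBelow (Set.range fun y : H => ⨆ x : A, ‖(x : H) - y‖) :=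
    ⟨0, by rintro r ⟨y, rfl⟩; exact Real.iSup_nonneg fun x => norm_nonneg _⟩
  exact (ciInf_le hbdd y).trans (Real.iSup_le (fun x => h x x.2) ha)

theorem card_mul_card_sub_one_mul_sq_le_sum_sum {z : ι → H} {β : ℝ} (hβ : 0 ≤ β)
    (hsep : ∀ i j, i ≠ j → β ≤ ‖z i - z j‖) :
    Fintype.card ι * (Fintype.card ι - 1) * β ^ 2 ≤ ∑ i, ∑ j, ‖z i - z j‖ ^ 2 := by
  classical
  have hrow : ∀ i, (Fintype.card ι - 1) * β ^ 2 ≤ ∑ j, ‖z i - z j‖ ^ 2 := by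
    intro i
    rw [← Finset.add_sum_erase _ _ (Finset.mem_univ i), sub_self, norm_zero]
    calc (Fintype.card ι - 1) * β ^ 2 = ∑ _j ∈ Finset.univ.erase i, β ^ 2 := by
          rw [Finset.sum_const, Finset.card_erase_of_mem (Finset.mem_univ i), nsmul_eq_mul,
            Finset.card_univ, Nat.cast_pred (Fintype.card_pos_iff.2 ⟨i⟩)]
      _ ≤ ∑ j ∈ Finset.univ.erase i, ‖z i - z j‖ ^ 2 :=
          Finset.sum_le_sum fun j hj =>
            pow_le_pow_left₀ hβ (hsep i j (Finset.ne_of_mem_erase hj).symm) 2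
      _ ≤ _ := by simp
  calc Fintype.card ι * (Fintype.card ι - 1) * β ^ 2
        = ∑ _i : ι, (Fintype.card ι - 1) * β ^ 2 := by
          rw [Finset.sum_const, Finset.card_univ, nsmul_eq_mul, mul_assoc]
    _ ≤ _ := Finset.sum_le_sum fun i _ => hrow i

end

section

variable {H : Type*} [NormedAddCommGroup H] [InnerProductSpace ℝ H]
  {ι : Type*} [Fintype ι]

theorem sum_sum_norm_sub_sq_add (z : ι → H) (y : H) :
    ∑ i, ∑ j, ‖z i - z j‖ ^ 2 + 2 * ‖∑ i, (z i - y)‖ ^ 2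
      = 2 * Fintype.card ι * ∑ i, ‖z i - y‖ ^ 2 := by
  have hsq : ∀ i j, ‖z i - z j‖ ^ 2
      = ‖z i - y‖ ^ 2 + ‖z j - y‖ ^ 2 - 2 * inner ℝ (z i - y) (z j - y) := by
    intro i j
    rw [show z i - z j = (z i - y) - (z j - y) by abel, norm_sub_sq_real]
    ring
  have hcross : ∑ i, ∑ j, 2 * inner ℝ (z i - y) (z j - y) = 2 * ‖∑ i, (z i - y)‖ ^ 2 := by
    simp_rw [← Finset.mul_sum, ← inner_sum, ← sum_inner, real_inner_self_eq_norm_sq]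
  rw [← hcross]
  simp_rw [hsq, Finset.sum_sub_distrib, Finset.sum_add_distrib, Finset.sum_const,
    Finset.card_univ, nsmul_eq_mul, ← Finset.mul_sum]
  ring

theorem exists_le_norm_sub_sq_of_separated [Nonempty ι] {z : ι → H} {β : ℝ} (hβ : 0 ≤ β)
    (hsep : ∀ i j, i ≠ j → β ≤ ‖z i - z j‖) (y : H) :
    ∃ i, (1 - (Fintype.card ι : ℝ)⁻¹) * β ^ 2 / 2 ≤ ‖z i - y‖ ^ 2 := by
  have hn : (0 : ℝ) < Fintype.card ι := Nat.cast_pos.2 Fintype.card_pos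
  have hsum : ∑ _i : ι, (1 - (Fintype.card ι : ℝ)⁻¹) * β ^ 2 / 2 ≤ ∑ i, ‖z i - y‖ ^ 2 := by
    have hsep_sum := card_mul_card_sub_one_mul_sq_le_sum_sum hβ hsep
    have hid := sum_sum_norm_sub_sq_add z y
    have hnonneg : 0 ≤ ‖∑ i, (z i - y)‖ ^ 2 := by positivity
    rw [Finset.sum_const, Finset.card_univ, nsmul_eq_mul]
    refine le_of_mul_le_mul_left ?_ (by positivity : (0 : ℝ) < 2 * Fintype.card ι)
    field_simp
    nlinarith
  obtain ⟨i, -, hi⟩ := Finset.exists_le_of_sum_le Finset.univ_nonempty hsum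
  exact ⟨i, hi⟩

theorem norm_centroid_sub_sq_le [Nonempty ι] {z : ι → H} {β : ℝ} (hβ : 0 ≤ β)
    (hsep : ∀ i j, i ≠ j → β ≤ ‖z i - z j‖) {x : H} {D : ℝ} (hD : ∀ i, ‖z i - x‖ ≤ D) :
    ‖(Fintype.card ι : ℝ)⁻¹ • ∑ i, z i - x‖ ^ 2
      ≤ D ^ 2 - (1 - (Fintype.card ι : ℝ)⁻¹) * β ^ 2 / 2 := by
  set n : ℝ := (Fintype.card ι : ℝ)
  have hn : 0 < n := Nat.cast_pos.2 Fintype.card_pos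
  have hsum : ∑ i, (z i - x) = n • (n⁻¹ • ∑ i, z i - x) := by
    rw [smul_sub, smul_inv_smul₀ hn.ne', Finset.sum_sub_distrib, Finset.sum_const,
      Finset.card_univ, Nat.cast_smul_eq_nsmul]
  have hnorm : ‖∑ i, (z i - x)‖ ^ 2 = n ^ 2 * ‖n⁻¹ • ∑ i, z i - x‖ ^ 2 := by
    rw [hsum, norm_smul, mul_pow, Real.norm_of_nonneg hn.le]
  have hsumD : ∑ i, ‖z i - x‖ ^ 2 ≤ n * D ^ 2 := by
    calc ∑ i, ‖z i - x‖ ^ 2 ≤ ∑ _i : ι, D ^ 2 :=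
          Finset.sum_le_sum fun i _ => pow_le_pow_left₀ (norm_nonneg _) (hD i) 2
      _ = n * D ^ 2 := by rw [Finset.sum_const, Finset.card_univ, nsmul_eq_mul]
  have hsep_sum := card_mul_card_sub_one_mul_sq_le_sum_sum hβ hsep
  have hid := sum_sum_norm_sub_sq_add z x
  rw [hnorm] at hid
  refine le_of_mul_le_mul_left ?_ (by positivity : 0 < 2 * n ^ 2)
  have hrhs : 2 * n ^ 2 * (D ^ 2 - (1 - n⁻¹) * β ^ 2 / 2)
      = 2 * n * (n * D ^ 2) - n * (n - 1) * β ^ 2 := by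
    field_simp
  rw [hrhs]
  nlinarith

theorem sqrt_le_chebRadius_of_separated [Nonempty ι] {A : Set H} (hA : Bornology.IsBounded A)
    {z : ι → H} (hz : ∀ i, z i ∈ A) {β : ℝ} (hβ : 0 ≤ β)
    (hsep : ∀ i j, i ≠ j → β ≤ ‖z i - z j‖) :
    √((1 - (Fintype.card ι : ℝ)⁻¹) * β ^ 2 / 2) ≤ chebRadius A := by
  refine le_chebRadius hA fun y => ?_
  obtain ⟨i, hi⟩ := exists_le_norm_sub_sq_of_separated hβ hsep y
  exact ⟨z i, hz i, (Real.sqrt_le_left (norm_nonneg _)).2 hi⟩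

theorem chebRadius_le_sqrt_of_separated [Nonempty ι] {A : Set H} (hA : Bornology.IsBounded A)
    {z : ι → H} (hz : ∀ i, z i ∈ A) {β : ℝ} (hβ : 0 ≤ β)
    (hsep : ∀ i j, i ≠ j → β ≤ ‖z i - z j‖) :
    chebRadius A ≤ √(Metric.diam A ^ 2 - (1 - (Fintype.card ι : ℝ)⁻¹) * β ^ 2 / 2) := by
  refine chebRadius_le (y := (Fintype.card ι : ℝ)⁻¹ • ∑ i, z i) (Real.sqrt_nonneg _)
    fun x hx => ?_
  rw [norm_sub_rev]
  refine Real.le_sqrt_of_sq_le (norm_centroid_sub_sq_le hβ hsep fun i => ?_)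
  rw [← dist_eq_norm]
  exact Metric.dist_le_diam_of_mem hA (hz i) hx

end

theorem stmt9_general {H : Type*} [NormedAddCommGroup H] [InnerProductSpace ℝ H] (A : Set H)
    (hd : Metric.diam A = Real.sqrt 2)
    (hsimp : ∀ ε ∈ Set.Ioo (0 : ℝ) (Real.sqrt 2), ∀ p : ℕ, 0 < p →
      ∃ z : Fin (p + 1) → H, (∀ i, z i ∈ A) ∧
        ∀ i j, i ≠ j → Real.sqrt 2 - ε ≤ ‖z i - z j‖) :
    chebRadius A = 1 := by
  have hA : Bornology.IsBounded A := by
    by_contra h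
    have := hd ▸ Metric.diam_eq_zero_of_unbounded h
    norm_num at this
  -- `ε k` is both the slack and `1 / n` for the `n = k + 2` points supplied by `hsimp`
  set ε : ℕ → ℝ := fun k => ((k : ℝ) + 2)⁻¹
  set t : ℕ → ℝ := fun k => (1 - ε k) * (√2 - ε k) ^ 2 / 2
  have hε : Tendsto ε atTop (𝓝 0) :=
    tendsto_inv_atTop_zero.comp (tendsto_atTop_add_const_right _ 2 tendsto_natCast_atTop_atTop)
  have ht : Tendsto t atTop (𝓝 1) := by
    have h := ((show Continuous fun e : ℝ => (1 - e) * (√2 - e) ^ 2 / 2 by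
      fun_prop).tendsto 0).comp hε
    rwa [show (1 - 0) * (√2 - 0) ^ 2 / 2 = (1 : ℝ) by norm_num] at h
  have hbounds : ∀ k, √(t k) ≤ chebRadius A ∧ chebRadius A ≤ √(2 - t k) := by
    intro k
    have hεk : ε k ∈ Set.Ioo 0 √2 :=
      ⟨by positivity, (inv_le_one_of_one_le₀ (by linarith [k.cast_nonneg (α := ℝ)])).trans_lt
        Real.one_lt_sqrt_two⟩
    obtain ⟨z, hz, hsep⟩ := hsimp (ε k) hεk (k + 1) k.succ_pos
    have hcard : ((Fintype.card (Fin (k + 1 + 1)) : ℕ) : ℝ)⁻¹ = ε k := by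
      simp only [Fintype.card_fin, ε]
      push_cast
      ring
    have hβ : 0 ≤ √2 - ε k := sub_nonneg.2 hεk.2.le
    have hlo := sqrt_le_chebRadius_of_separated hA hz hβ hsep
    have hhi := chebRadius_le_sqrt_of_separated hA hz hβ hsep
    rw [hcard] at hlo hhi
    rw [hd, Real.sq_sqrt zero_le_two] at hhi
    exact ⟨hlo, hhi⟩
  have hlim : Tendsto (fun k => √(2 - t k)) atTop (𝓝 1) := by
    convert ((tendsto_const_nhds (x := (2 : ℝ))).sub ht).sqrt
    norm_num
  exact tendsto_const_nhds_iff.mp (tendsto_of_tendsto_of_tendsto_of_le_of_le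
    (by simpa using ht.sqrt) hlim (fun k => (hbounds k).1) (fun k => (hbounds k).2))

theorem stmt9 {H : Type*} [NormedAddCommGroup H] [InnerProductSpace ℝ H] [CompleteSpace H] (A : Set H)
    (hd : Metric.diam A = Real.sqrt 2)
    (hsimp : ∀ ε ∈ Set.Ioo (0 : ℝ) (Real.sqrt 2), ∀ p : ℕ, 0 < p →
      ∃ z : Fin (p + 1) → H, (∀ i, z i ∈ A) ∧
        ∀ i j, i ≠ j → Real.sqrt 2 - ε ≤ ‖z i - z j‖) :
    chebRadius A = 1 :=
  stmt9_general A hd hsimp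
end

section
/- Let z_1, …, z_{p+1} be points in a real Hilbert space H with pairwise distances at least δ > 0. Then the Chebyshev radius of the set {z_1, …, z_{p+1}} with respect to H is at least δ·√(p/(2(p+1))). -/
open Finset

section PairwiseDistances

variable {ι E : Type*} [Fintype ι] [SeminormedAddCommGroup E]

theorem sum_sum_norm_sub_sq_eq [InnerProductSpace ℝ E] (a : ι → E) :
    ∑ i, ∑ j, ‖a i - a j‖ ^ 2 =
      2 * Fintype.card ι * ∑ i, ‖a i‖ ^ 2 - 2 * ‖∑ i, a i‖ ^ 2 := by
  simp_rw [norm_sub_sq_real, sum_add_distrib, sum_sub_distrib, ← mul_sum, ← inner_sum,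
    ← sum_inner, real_inner_self_eq_norm_sq, sum_const, card_univ, nsmul_eq_mul, ← mul_sum]
  ring

theorem sum_sum_norm_sub_sq_le [InnerProductSpace ℝ E] (a : ι → E) :
    ∑ i, ∑ j, ‖a i - a j‖ ^ 2 ≤ 2 * Fintype.card ι * ∑ i, ‖a i‖ ^ 2 := by
  rw [sum_sum_norm_sub_sq_eq]
  nlinarith [sq_nonneg ‖∑ i, a i‖]

variable [DecidableEq ι]

theorem card_sub_one_mul_sq_le_sum_norm_sub_sq {a : ι → E} {δ : ℝ} (hδ : 0 ≤ δ)
    (ha : ∀ i j, i ≠ j → δ ≤ ‖a i - a j‖) (i : ι) :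
    ((Fintype.card ι : ℝ) - 1) * δ ^ 2 ≤ ∑ j, ‖a i - a j‖ ^ 2 := by
  have hsep : ∀ j ∈ univ.erase i, δ ^ 2 ≤ ‖a i - a j‖ ^ 2 := fun j hj =>
    pow_le_pow_left₀ hδ (ha i j (ne_of_mem_erase hj).symm) 2
  calc ((Fintype.card ι : ℝ) - 1) * δ ^ 2 = (univ.erase i).card • δ ^ 2 := by
        rw [card_erase_of_mem (mem_univ i), card_univ, nsmul_eq_mul,
          Nat.cast_sub (Fintype.card_pos_iff.2 ⟨i⟩), Nat.cast_one]
    _ ≤ ∑ j ∈ univ.erase i, ‖a i - a j‖ ^ 2 := card_nsmul_le_sum _ _ _ hsep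
    _ ≤ ∑ j, ‖a i - a j‖ ^ 2 :=
        sum_le_sum_of_subset_of_nonneg (erase_subset _ _) fun _ _ _ => sq_nonneg _

theorem exists_sq_mul_le_norm_sub_sq [InnerProductSpace ℝ E] [Nonempty ι] {z : ι → E}
    {δ : ℝ} (hδ : 0 ≤ δ) (hz : ∀ i j, i ≠ j → δ ≤ ‖z i - z j‖) (y : E) :
    ∃ i, δ ^ 2 * (((Fintype.card ι : ℝ) - 1) / (2 * Fintype.card ι)) ≤ ‖z i - y‖ ^ 2 := by
  set n : ℝ := (Fintype.card ι : ℝ)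
  set a : ι → E := fun i => z i - y
  have ha : ∀ i j, i ≠ j → δ ≤ ‖a i - a j‖ := by
    intro i j hij
    simpa [a] using hz i j hij
  have hn : 0 < n := Nat.cast_pos.2 Fintype.card_pos
  have hsum : (n - 1) * δ ^ 2 ≤ 2 * ∑ i, ‖a i‖ ^ 2 := by
    refine le_of_mul_le_mul_left ?_ hn
    calc n * ((n - 1) * δ ^ 2) = ∑ _i : ι, (n - 1) * δ ^ 2 := by simp [n]
      _ ≤ ∑ i, ∑ j, ‖a i - a j‖ ^ 2 :=
        sum_le_sum fun i _ => card_sub_one_mul_sq_le_sum_norm_sub_sq hδ ha i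
      _ ≤ n * (2 * ∑ i, ‖a i‖ ^ 2) := by
        rw [← mul_assoc, mul_comm n]
        exact sum_sum_norm_sub_sq_le a
  obtain ⟨i, -, hi⟩ := exists_le_of_sum_le (f := fun _ => δ ^ 2 * ((n - 1) / (2 * n)))
    (g := fun i => ‖a i‖ ^ 2) univ_nonempty (by
      rw [sum_const, card_univ, nsmul_eq_mul]
      change n * _ ≤ _
      field_simp
      linarith)
  exact ⟨i, hi⟩

end PairwiseDistances

theorem le_chebRadius_of_forall_exists_le {H : Type*} [NormedAddCommGroup H] {A : Set H}
    (hA : Bornology.IsBounded A) {r : ℝ} (h : ∀ y, ∃ x ∈ A, r ≤ ‖x - y‖) :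
    r ≤ chebRadius A := by
  refine le_ciInf fun y => ?_
  obtain ⟨x, hx, hr⟩ := h y
  obtain ⟨C, hC⟩ := hA.exists_norm_le
  have hbdd : BddAbove (Set.range fun x : A => ‖(x : H) - y‖) :=
    ⟨C + ‖y‖, Set.forall_mem_range.2 fun x =>
      (norm_sub_le _ _).trans (by grw [hC x x.2])⟩
  exact hr.trans (le_ciSup hbdd ⟨x, hx⟩)

theorem stmt10_general {H : Type*} [NormedAddCommGroup H] [InnerProductSpace ℝ H] (p : ℕ)
    (z : Fin (p + 1) → H) (δ : ℝ) (hδ : 0 < δ)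
    (hz : ∀ i j, i ≠ j → δ ≤ ‖z i - z j‖) :
    δ * Real.sqrt (p / (2 * (p + 1))) ≤ chebRadius (Set.range z) := by
  refine le_chebRadius_of_forall_exists_le (Set.finite_range z).isBounded fun y => ?_
  obtain ⟨i, hi⟩ := exists_sq_mul_le_norm_sub_sq hδ.le hz y
  refine ⟨z i, Set.mem_range_self i,
    (le_abs_self _).trans (abs_le_of_sq_le_sq ?_ (norm_nonneg _))⟩
  rw [mul_pow, Real.sq_sqrt (by positivity)]
  simpa using hi

theorem stmt10 {H : Type*} [NormedAddCommGroup H] [InnerProductSpace ℝ H] [CompleteSpace H] (p : ℕ) (hp : 0 < p)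
    (z : Fin (p + 1) → H) (δ : ℝ) (hδ : 0 < δ)
    (hz : ∀ i j, i ≠ j → δ ≤ ‖z i - z j‖) :
    δ * Real.sqrt (p / (2 * (p + 1))) ≤ chebRadius (Set.range z) :=
  stmt10_general p z δ hδ hz
end

section
/- Let A be a finite subset of a real Hilbert space H with Chebyshev center c and Chebyshev radius r. Then c lies in the convex hull of A ∩ S(c, r), where S(c, r) is the sphere of center c and radius r. -/
open Filter Topology
open scoped RealInnerProductSpace

section InnerProductSpace

variable {H : Type*} [NormedAddCommGroup H] [InnerProductSpace ℝ H]

theorem exists_forall_inner_sub_pos_of_notMem {K : Set H} (hconv : Convex ℝ K)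
    (hcomplete : IsComplete K) {c : H} (hc : c ∉ K) : ∃ v : H, ∀ x ∈ K, 0 < ⟪v, x - c⟫ := by
  rcases K.eq_empty_or_nonempty with rfl | hne
  · exact ⟨0, by simp⟩
  obtain ⟨p, hpK, hp⟩ := exists_norm_eq_iInf_of_complete_convex hne hcomplete hconv c
  have hobtuse := (norm_eq_iInf_iff_real_inner_le_zero hconv hpK).mp hp
  have hpc : 0 < ‖p - c‖ := norm_pos_iff.mpr (sub_ne_zero.mpr fun h => hc (h ▸ hpK))
  refine ⟨p - c, fun x hx => ?_⟩
  have hsplit : ⟪p - c, x - c⟫ = ‖p - c‖ ^ 2 - ⟪c - p, x - p⟫ := by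
    rw [show x - c = (x - p) + (p - c) by abel, inner_add_right, real_inner_self_eq_norm_sq,
      ← neg_sub p c, inner_neg_left]
    ring
  rw [hsplit]
  nlinarith [hobtuse x hx]

theorem eventually_norm_sub_smul_lt_norm {w v : H} (h : 0 < ⟪v, w⟫) :
    ∀ᶠ t in 𝓝[>] (0 : ℝ), ‖w - t • v‖ < ‖w‖ := by
  have hneg : ∀ᶠ t in 𝓝[>] (0 : ℝ), t * ‖v‖ ^ 2 - 2 * ⟪v, w⟫ < 0 :=
    nhdsWithin_le_nhds (ContinuousAt.eventually_lt (by fun_prop) continuousAt_const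
      (by simpa using h))
  filter_upwards [hneg, self_mem_nhdsWithin] with t ht (htpos : 0 < t)
  have hexpand : ‖w - t • v‖ ^ 2 = ‖w‖ ^ 2 + t * (t * ‖v‖ ^ 2 - 2 * ⟪v, w⟫) := by
    rw [norm_sub_sq_real, inner_smul_right, real_inner_comm, norm_smul, Real.norm_eq_abs, mul_pow,
      sq_abs]
    ring
  refine (pow_lt_pow_iff_left₀ (norm_nonneg _) (norm_nonneg _) two_ne_zero).mp ?_
  rw [hexpand]
  nlinarith

theorem eventually_norm_sub_smul_lt {w : H} {r : ℝ} (h : ‖w‖ < r) (v : H) :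
    ∀ᶠ t in 𝓝 (0 : ℝ), ‖w - t • v‖ < r :=
  ContinuousAt.eventually_lt (by fun_prop) continuousAt_const (by simpa using h)

end InnerProductSpace

section ChebyshevRadius

variable {H : Type*} [NormedAddCommGroup H]

theorem Set.Finite.norm_sub_le_iSup {A : Set H} (hfin : A.Finite) (y : H) {x : H} (hx : x ∈ A) :
    ‖x - y‖ ≤ ⨆ x : A, ‖(x : H) - y‖ :=
  have := hfin.to_subtype
  le_ciSup (f := fun x : A => ‖(x : H) - y‖) (Finite.bddAbove_range _) ⟨x, hx⟩

theorem chebRadius_le_iSup (A : Set H) (y : H) : chebRadius A ≤ ⨆ x : A, ‖(x : H) - y‖ :=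
  ciInf_le ⟨0, Set.forall_mem_range.2 fun _ => Real.iSup_nonneg fun _ => norm_nonneg _⟩ y

theorem chebRadius_lt_of_forall_norm_sub_lt {A : Set H} (hA : A.Nonempty) (hfin : A.Finite)
    {y : H} {ρ : ℝ} (h : ∀ x ∈ A, ‖x - y‖ < ρ) : chebRadius A < ρ := by
  have := hA.to_subtype
  have := hfin.to_subtype
  obtain ⟨⟨x, hx⟩, hmax⟩ := exists_eq_ciSup_of_finite (f := fun x : A => ‖(x : H) - y‖)
  exact (chebRadius_le_iSup A y).trans_lt (hmax ▸ h x hx)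

end ChebyshevRadius

theorem stmt11_general {H : Type*} [NormedAddCommGroup H] [InnerProductSpace ℝ H] (A : Set H)
    (hA : A.Nonempty) (hfin : A.Finite) (c : H) (r : ℝ)
    (hr : r = chebRadius A)
    (hc : (⨆ x : A, ‖(x : H) - c‖) = chebRadius A) :
    c ∈ convexHull ℝ (A ∩ Metric.sphere c r) := by
  by_contra hnot
  set B := A ∩ Metric.sphere c r
  obtain ⟨v, hv⟩ := exists_forall_inner_sub_pos_of_notMem (convex_convexHull ℝ B)
    (((hfin.inter_of_left _).isCompact_convexHull (𝕜 := ℝ)).isComplete) hnot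
  have hle : ∀ x ∈ A, ‖x - c‖ ≤ r := fun x hx => hr ▸ hc ▸ hfin.norm_sub_le_iSup c hx
  have hcloser : ∀ x ∈ A, ∀ᶠ t in 𝓝[>] (0 : ℝ), ‖x - (c + t • v)‖ < r := by
    intro x hx
    simp_rw [sub_add_eq_sub_sub]
    rcases (hle x hx).lt_or_eq with hlt | heq
    · exact nhdsWithin_le_nhds (eventually_norm_sub_smul_lt hlt v)
    · exact heq ▸ eventually_norm_sub_smul_lt_norm
        (hv x (subset_convexHull ℝ B ⟨hx, by rwa [mem_sphere_iff_norm]⟩))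
  obtain ⟨t, ht⟩ := (hfin.eventually_all.mpr hcloser).exists
  exact (chebRadius_lt_of_forall_norm_sub_lt hA hfin ht).ne' hr

theorem stmt11 {H : Type*} [NormedAddCommGroup H] [InnerProductSpace ℝ H] [CompleteSpace H] (A : Set H)
    (hA : A.Nonempty) (hfin : A.Finite) (c : H) (r : ℝ)
    (hr : r = chebRadius A)
    (hc : (⨆ x : A, ‖(x : H) - c‖) = chebRadius A) :
    c ∈ convexHull ℝ (A ∩ Metric.sphere c r) :=
  stmt11_general A hA hfin c r hr hc
end

section
/- Let A be a bounded subset of a real Hilbert space with Chebyshev radius r_H(A) = 1. Then for every n ≥ 2 there exist finitely many points x_1, …, x_k ∈ A such that the intersection of the closed balls B(x_i, 1 − 1/n), i = 1,…,k, is empty. -/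
/-!
Suppose every finite subfamily of the balls `B(x, r)`, `x ∈ A`, `r = 1 - 1/n`, had a common point.
The balls are closed and convex, hence weakly closed, and weakly compact since the Riesz
isomorphism carries the weak topology to the weak-* topology, where Banach–Alaoglu applies.
By the finite intersection property all of them then share a point `z`, so `A ⊆ B(z, r)` and
`r_H(A) ≤ r < 1`.
-/

open Metric InnerProductSpace

theorem chebRadius_empty {H : Type*} [NormedAddCommGroup H] : chebRadius (∅ : Set H) = 0 := by
  simp [chebRadius]

theorem chebRadius_le_of_subset_closedBall {H : Type*} [NormedAddCommGroup H] {A : Set H}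
    {z : H} {r : ℝ} (hA : A.Nonempty) (hAz : A ⊆ closedBall z r) : chebRadius A ≤ r := by
  have : Nonempty A := hA.to_subtype
  refine (ciInf_le ⟨0, ?_⟩ z).trans (ciSup_le fun x => ?_)
  · rintro _ ⟨y, rfl⟩
    exact Real.iSup_nonneg fun x => norm_nonneg _
  · simpa [dist_eq_norm] using hAz x.2

section Hilbert

variable {H : Type*} [NormedAddCommGroup H] [InnerProductSpace ℝ H]

theorem isClosed_toWeakSpace_image {s : Set H} (hc : IsClosed s) (hs : Convex ℝ s) :
    IsClosed (toWeakSpace ℝ H '' s) := by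
  rw [← hc.closure_eq, hs.toWeakSpace_closure ℝ]
  exact isClosed_closure

variable [CompleteSpace H]

theorem continuous_toWeakSpace_toDual_symm :
    Continuous fun φ : WeakDual ℝ H =>
      toWeakSpace ℝ H ((toDual ℝ H).symm (WeakDual.toStrongDual φ)) := by
  refine WeakBilin.continuous_of_continuous_eval _ fun ℓ => ?_
  convert WeakDual.eval_continuous ((toDual ℝ H).symm ℓ) using 2 with φ
  change ℓ ((toDual ℝ H).symm (WeakDual.toStrongDual φ)) =
    WeakDual.toStrongDual φ ((toDual ℝ H).symm ℓ)
  rw [← toDual_symm_apply, ← toDual_symm_apply (y := WeakDual.toStrongDual φ), real_inner_comm]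

theorem isCompact_toWeakSpace_closedBall (c : H) (R : ℝ) :
    IsCompact (toWeakSpace ℝ H '' closedBall c R) := by
  convert (WeakDual.isCompact_closedBall (toDual ℝ H c) R).image
    continuous_toWeakSpace_toDual_symm using 1
  rw [← LinearEquiv.image_symm_eq_preimage, Set.image_image]
  simp only [WeakDual.symm_toStrongDual, StrongDual.toStrongDual_toWeakDual]
  rw [← Set.image_image (toWeakSpace ℝ H) (toDual ℝ H).symm, LinearIsometryEquiv.image_closedBall,
    LinearIsometryEquiv.symm_apply_apply]

theorem iInter_nonempty_of_isClosed_of_convex {ι : Type*} {t : ι → Set H}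
    (hc : ∀ i, IsClosed (t i)) (hv : ∀ i, Convex ℝ (t i)) {i₀ : ι}
    (hb : Bornology.IsBounded (t i₀)) (hfin : ∀ u : Finset ι, (⋂ i ∈ u, t i).Nonempty) :
    (⋂ i, t i).Nonempty := by
  classical
  obtain ⟨R, hR⟩ := hb.subset_closedBall 0
  have hK : IsCompact (toWeakSpace ℝ H '' t i₀) :=
    (isCompact_toWeakSpace_closedBall 0 R).of_isClosed_subset
      (isClosed_toWeakSpace_image (hc i₀) (hv i₀)) (Set.image_mono hR)
  obtain ⟨y, -, hy⟩ := hK.inter_iInter_nonempty (fun i => toWeakSpace ℝ H '' t i)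
    (fun i => isClosed_toWeakSpace_image (hc i) (hv i)) fun u => by
      obtain ⟨x, hx⟩ := hfin (insert i₀ u)
      simp only [Finset.mem_insert, Set.iInter_iInter_eq_or_left] at hx
      exact ⟨toWeakSpace ℝ H x, Set.mem_image_of_mem _ hx.1,
        Set.mem_iInter₂.2 fun i hi => Set.mem_image_of_mem _ (Set.mem_iInter₂.1 hx.2 i hi)⟩
  refine ⟨(toWeakSpace ℝ H).symm y, Set.mem_iInter.2 fun i => ?_⟩
  obtain ⟨x, hx, rfl⟩ := Set.mem_iInter.1 hy i
  simpa using hx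

theorem exists_subset_closedBall_of_forall_iInter_closedBall_nonempty {A : Set H} {r : ℝ}
    (hA : A.Nonempty)
    (hfin : ∀ (k : ℕ) (x : Fin k → H), (∀ i, x i ∈ A) → (⋂ i, closedBall (x i) r).Nonempty) :
    ∃ z, A ⊆ closedBall z r := by
  obtain ⟨x₀, hx₀⟩ := hA
  obtain ⟨z, hz⟩ := iInter_nonempty_of_isClosed_of_convex (t := fun x : A => closedBall (x : H) r)
    (fun _ => isClosed_closedBall) (fun _ => convex_closedBall _ _) (i₀ := ⟨x₀, hx₀⟩)
    isBounded_closedBall fun u => by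
      obtain ⟨z, hz⟩ := hfin u.card (fun i => u.equivFin.symm i) fun i => (u.equivFin.symm i).1.2
      refine ⟨z, Set.mem_iInter₂.2 fun x hx => ?_⟩
      simpa using Set.mem_iInter.1 hz (u.equivFin ⟨x, hx⟩)
  exact ⟨z, fun x hx => mem_closedBall_comm.1 (Set.mem_iInter.1 hz ⟨x, hx⟩)⟩

end Hilbert

theorem stmt17_general {H : Type*} [NormedAddCommGroup H] [InnerProductSpace ℝ H] [CompleteSpace H] (A : Set H)
    (hr : chebRadius A = 1) :
    ∀ n : ℕ, 2 ≤ n → ∃ (k : ℕ) (x : Fin k → H), (∀ i, x i ∈ A) ∧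
      (⋂ i, Metric.closedBall (x i) (1 - 1 / (n : ℝ))) = ∅ := by
  intro n hn
  by_contra! hfin
  have hA : A.Nonempty := Set.nonempty_iff_ne_empty.2 fun h => by
    simp [h, chebRadius_empty] at hr
  obtain ⟨z, hz⟩ := exists_subset_closedBall_of_forall_iInter_closedBall_nonempty hA hfin
  have hle := chebRadius_le_of_subset_closedBall hA hz
  have hn_pos : (0 : ℝ) < n := by exact_mod_cast (by omega : 0 < n)
  have : 0 < 1 / (n : ℝ) := one_div_pos.2 hn_pos
  linarith

theorem stmt17 {H : Type*} [NormedAddCommGroup H] [InnerProductSpace ℝ H] [CompleteSpace H] (A : Set H)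
    (hb : Bornology.IsBounded A) (hr : chebRadius A = 1) :
    ∀ n : ℕ, 2 ≤ n → ∃ (k : ℕ) (x : Fin k → H), (∀ i, x i ∈ A) ∧
      (⋂ i, Metric.closedBall (x i) (1 - 1 / (n : ℝ))) = ∅ :=
  stmt17_general A hr
end

section
/- Let A be an extremal set in a real Hilbert space H with r_H(A) = 1 and Chebyshev center c. Then for every ε ∈ (0,1), the set A_ε := A \ B(c, 1 − ε) is also an extremal set with r_H(A_ε) = 1 and d(A_ε) = √2. -/
open Set Metric Filter Topology RealInnerProductSpace

section NormedGroup

variable {E : Type*} [NormedAddCommGroup E] {S : Set E}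

theorem chebRadius_le_iSup_norm_sub (S : Set E) (y : E) :
    chebRadius S ≤ ⨆ x : S, ‖(x : E) - y‖ :=
  ciInf_le ⟨0, by rintro _ ⟨z, rfl⟩; exact Real.iSup_nonneg fun _ => norm_nonneg _⟩ y

theorem chebRadius_le_of_forall_norm_sub_le_s19 {y : E} {r : ℝ} (h : ∀ x ∈ S, ‖x - y‖ ≤ r)
    (hr : 0 ≤ r) : chebRadius S ≤ r :=
  (chebRadius_le_iSup_norm_sub S y).trans (Real.iSup_le (fun x => h x x.2) hr)

theorem norm_sub_le_iSup_norm_sub (hS : Bornology.IsBounded S) {x : E} (hx : x ∈ S) (y : E) :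
    ‖x - y‖ ≤ ⨆ z : S, ‖(z : E) - y‖ := by
  obtain ⟨R, hR⟩ := (isBounded_iff_subset_closedBall y).1 hS
  refine le_ciSup (f := fun z : S => ‖(z : E) - y‖) ⟨R, ?_⟩ ⟨x, hx⟩
  rintro _ ⟨z, rfl⟩
  simpa [dist_eq_norm] using hR z.2

theorem subset_closedBall_iSup_norm_sub {c : E} (h : (⨆ x : S, ‖(x : E) - c‖) ≠ 0) :
    S ⊆ closedBall c (⨆ x : S, ‖(x : E) - c‖) := by
  have hbdd : BddAbove (range fun x : S => ‖(x : E) - c‖) := by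
    by_contra hnb
    exact h (Real.iSup_of_not_bddAbove hnb)
  intro x hx
  rw [mem_closedBall, dist_eq_norm]
  exact le_ciSup hbdd ⟨x, hx⟩

theorem exists_lt_norm_sub_of_le_chebRadius {r a : ℝ} (hr : r ≤ chebRadius S) (z : E)
    (ha : 0 ≤ a) (har : a < r) : ∃ x ∈ S, a < ‖x - z‖ := by
  by_contra! h
  have := (hr.trans (chebRadius_le_iSup_norm_sub S z)).trans (Real.iSup_le (fun x => h x x.2) ha)
  linarith

end NormedGroup

section NormedSpace

variable {E : Type*} [NormedAddCommGroup E] [NormedSpace ℝ E]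

theorem norm_sub_add_smul_sub_le (x c y : E) {t : ℝ} (ht0 : 0 ≤ t) (ht1 : t ≤ 1) :
    ‖x - (c + t • (y - c))‖ ≤ (1 - t) * ‖x - c‖ + t * ‖x - y‖ := by
  have hsplit : x - (c + t • (y - c)) = (1 - t) • (x - c) + t • (x - y) := by module
  rw [hsplit]
  refine (norm_add_le _ _).trans_eq ?_
  rw [norm_smul, norm_smul, Real.norm_of_nonneg (sub_nonneg.2 ht1), Real.norm_of_nonneg ht0]

theorem le_chebRadius_diff_closedBall {A : Set E} {c : E} {r r' : ℝ} (hA : A ⊆ closedBall c r)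
    (hr : r ≤ chebRadius A) (hr' : r' < r) : r ≤ chebRadius (A \ closedBall c r') := by
  refine le_ciInf fun y => ?_
  set s := ⨆ x : ↥(A \ closedBall c r'), ‖(x : E) - y‖
  by_contra! hs
  have hs0 : 0 ≤ s := Real.iSup_nonneg fun _ => norm_nonneg _
  have hAb : Bornology.IsBounded A := isBounded_closedBall.subset hA
  obtain ⟨M, hM⟩ := (isBounded_iff_subset_closedBall y).1 hAb
  -- near `t = 0` the points of `A ∩ B(c, r')` stay within `r` of `c + t (y - c)`
  obtain ⟨t, ⟨ht0, ht1⟩, htM⟩ : ∃ t ∈ Ioo (0 : ℝ) 1, (1 - t) * r' + t * M < r := by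
    have hlim : Tendsto (fun t : ℝ => (1 - t) * r' + t * M) (𝓝[>] 0) (𝓝 r') := by
      have hcont : Continuous fun t : ℝ => (1 - t) * r' + t * M := by fun_prop
      simpa using hcont.continuousAt.tendsto.mono_left (nhdsWithin_le_nhds (a := (0 : ℝ)))
    exact (Filter.Eventually.and (Ioo_mem_nhdsGT one_pos)
      (hlim.eventually (gt_mem_nhds hr'))).exists
  have hfar : ∀ x ∈ A,
      ‖x - (c + t • (y - c))‖ ≤ max ((1 - t) * r + t * s) ((1 - t) * r' + t * M) := by
    intro x hx
    have hxc : ‖x - c‖ ≤ r := by simpa [dist_eq_norm] using hA hx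
    have hxy : ‖x - y‖ ≤ M := by simpa [dist_eq_norm] using hM hx
    refine (norm_sub_add_smul_sub_le x c y ht0.le ht1.le).trans ?_
    by_cases hxr' : x ∈ closedBall c r'
    · rw [mem_closedBall, dist_eq_norm] at hxr'
      exact le_max_of_le_right (by gcongr)
    · have hxs : ‖x - y‖ ≤ s :=
        norm_sub_le_iSup_norm_sub (hAb.subset sdiff_subset) ⟨hx, hxr'⟩ y
      exact le_max_of_le_left (by gcongr)
  have hmax := hr.trans (chebRadius_le_of_forall_norm_sub_le_s19 hfar
    (le_max_of_le_left (by nlinarith)))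
  rcases le_max_iff.1 hmax with h | h <;> nlinarith

end NormedSpace

section InnerProductSpace

variable {E : Type*} [NormedAddCommGroup E] [InnerProductSpace ℝ E]

theorem le_norm_sub_sq_of_far {x y c : E} {r t : ℝ} (ht0 : 0 < t) (ht1 : t ≤ 1)
    (htr : t ^ 2 ≤ r) (hx : ‖x - c‖ ≤ r) (hy : ‖y - c‖ ≤ r) (hxc : r - t ^ 2 ≤ ‖x - c‖)
    (hyz : r - t ^ 2 ≤ ‖y - (c + t • (x - c))‖) :
    2 * (r - t ^ 2) ^ 2 - t ^ 2 * r ^ 2 - (1 - t) * (2 * r * t + t * r ^ 2) ≤ ‖x - y‖ ^ 2 := by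
  set p := ⟪y - c, x - c⟫
  have hyz_sq : ‖y - (c + t • (x - c))‖ ^ 2 = ‖y - c‖ ^ 2 - 2 * (t * p) + t ^ 2 * ‖x - c‖ ^ 2 := by
    rw [show y - (c + t • (x - c)) = (y - c) - t • (x - c) by abel, norm_sub_sq_real,
      real_inner_smul_right, norm_smul, Real.norm_of_nonneg ht0.le, mul_pow]
  have hxy_sq : ‖x - y‖ ^ 2 = ‖x - c‖ ^ 2 + ‖y - c‖ ^ 2 - 2 * p := by
    rw [show x - y = (x - c) - (y - c) by abel, norm_sub_sq_real, real_inner_comm]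
    ring
  have hx_sq : (r - t ^ 2) ^ 2 ≤ ‖x - c‖ ^ 2 := pow_le_pow_left₀ (by linarith) hxc 2
  have hx_sq' : ‖x - c‖ ^ 2 ≤ r ^ 2 := pow_le_pow_left₀ (norm_nonneg _) hx 2
  have hy_sq : ‖y - c‖ ^ 2 ≤ r ^ 2 := pow_le_pow_left₀ (norm_nonneg _) hy 2
  have hyz_sq' : (r - t ^ 2) ^ 2 ≤ ‖y - (c + t • (x - c))‖ ^ 2 :=
    pow_le_pow_left₀ (by linarith) hyz 2
  -- `y` is far from `c + t (x - c)` only if it is almost orthogonal to `x - c`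
  have hp : 2 * p ≤ 2 * r * t + t * r ^ 2 := by
    refine le_of_mul_le_mul_left ?_ ht0
    nlinarith
  nlinarith

theorem sqrt_two_mul_le_diam {S : Set E} {c : E} {r : ℝ} (hS : S ⊆ closedBall c r)
    (hr : r ≤ chebRadius S) : √2 * r ≤ diam S := by
  rcases le_or_gt r 0 with hr0 | hr0
  · exact (mul_nonpos_of_nonneg_of_nonpos (Real.sqrt_nonneg 2) hr0).trans diam_nonneg
  have hSc : ∀ x ∈ S, ‖x - c‖ ≤ r := fun x hx => by simpa [dist_eq_norm] using hS hx
  set f : ℝ → ℝ := fun t => 2 * (r - t ^ 2) ^ 2 - t ^ 2 * r ^ 2 - (1 - t) * (2 * r * t + t * r ^ 2)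
  have hpair : ∀ t ∈ Ioo (0 : ℝ) 1, t ^ 2 < r → ∃ x ∈ S, ∃ y ∈ S, f t ≤ ‖x - y‖ ^ 2 := by
    rintro t ⟨ht0, ht1⟩ htr
    have hδ : 0 ≤ r - t ^ 2 := by linarith
    have hδr : r - t ^ 2 < r := by nlinarith
    obtain ⟨x, hxS, hxc⟩ := exists_lt_norm_sub_of_le_chebRadius hr c hδ hδr
    obtain ⟨y, hyS, hyz⟩ := exists_lt_norm_sub_of_le_chebRadius hr (c + t • (x - c)) hδ hδr
    exact ⟨x, hxS, y, hyS, le_norm_sub_sq_of_far ht0 ht1.le htr.le (hSc x hxS) (hSc y hyS)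
      hxc.le hyz.le⟩
  by_contra! hlt
  have hdiam_sq : diam S ^ 2 < 2 * r ^ 2 := by
    calc diam S ^ 2 < (√2 * r) ^ 2 := pow_lt_pow_left₀ hlt diam_nonneg two_ne_zero
      _ = 2 * r ^ 2 := by rw [mul_pow, Real.sq_sqrt zero_le_two]
  have hlim : Tendsto (fun t : ℝ => (f t, t ^ 2)) (𝓝[>] 0) (𝓝 (2 * r ^ 2, 0)) := by
    have hcont : Continuous fun t : ℝ => (f t, t ^ 2) := by fun_prop
    simpa [f] using hcont.continuousAt.tendsto.mono_left (nhdsWithin_le_nhds (a := (0 : ℝ)))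
  obtain ⟨t, ht, hft, htr⟩ : ∃ t ∈ Ioo (0 : ℝ) 1, diam S ^ 2 < f t ∧ t ^ 2 < r :=
    (Filter.Eventually.and (Ioo_mem_nhdsGT one_pos) (hlim.eventually
      (prod_mem_nhds (Ioi_mem_nhds hdiam_sq) (Iio_mem_nhds hr0)))).exists
  obtain ⟨x, hxS, y, hyS, hxy⟩ := hpair t ht htr
  have hxy_diam : ‖x - y‖ ≤ diam S := by
    simpa [dist_eq_norm] using dist_le_diam_of_mem (isBounded_closedBall.subset hS) hxS hyS
  nlinarith [norm_nonneg (x - y)]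

end InnerProductSpace

theorem stmt19_general {H : Type*} [NormedAddCommGroup H] [InnerProductSpace ℝ H] (A : Set H)
    (hr : chebRadius A = 1) (hd : Metric.diam A = Real.sqrt 2)
    (c : H) (hc : (⨆ x : A, ‖(x : H) - c‖) = chebRadius A)
    (ε : ℝ) (hε : ε ∈ Set.Ioo (0 : ℝ) 1) :
    chebRadius (A \ Metric.closedBall c (1 - ε)) = 1 ∧
      Metric.diam (A \ Metric.closedBall c (1 - ε)) = Real.sqrt 2 := by
  have hA : A ⊆ closedBall c 1 := by
    simpa [hc, hr] using subset_closedBall_iSup_norm_sub (S := A) (c := c) (by simp [hc, hr])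
  have hAε : A \ closedBall c (1 - ε) ⊆ closedBall c 1 := sdiff_subset.trans hA
  have hcheb : chebRadius (A \ closedBall c (1 - ε)) = 1 :=
    le_antisymm
      (chebRadius_le_of_forall_norm_sub_le_s19 (fun x hx => by simpa [dist_eq_norm] using hAε hx)
        zero_le_one)
      (le_chebRadius_diff_closedBall hA hr.ge (by linarith [hε.1]))
  refine ⟨hcheb, le_antisymm ?_ ?_⟩
  · exact hd ▸ diam_mono sdiff_subset (isBounded_closedBall.subset hA)
  · simpa using sqrt_two_mul_le_diam hAε hcheb.ge

theorem stmt19 {H : Type*} [NormedAddCommGroup H] [InnerProductSpace ℝ H] [CompleteSpace H] (A : Set H)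
    (hb : Bornology.IsBounded A) (hnt : A.Nontrivial)
    (hr : chebRadius A = 1) (hd : Metric.diam A = Real.sqrt 2)
    (c : H) (hc : (⨆ x : A, ‖(x : H) - c‖) = chebRadius A)
    (ε : ℝ) (hε : ε ∈ Set.Ioo (0 : ℝ) 1) :
    chebRadius (A \ Metric.closedBall c (1 - ε)) = 1 ∧
      Metric.diam (A \ Metric.closedBall c (1 - ε)) = Real.sqrt 2 :=
  stmt19_general A hr hd c hc ε hε
end
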